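/- arXiv:1304.1718 — 4 statements merged into one kernel-verified Lean document; each statement's English description precedes it below -/
import Mathlib

section
/- If G is an (X-cycle, V-cycle)-free graph, then G has a clique cutset, or G is isomorphic to a complete tripartite graph, or G is diamond-free. -/
open SimpleGraph

variable {V : Type*}

/-- A cycle in `G`, given as an injective map from `ZMod n` (`n ≥ 3`) sending
consecutive elements to adjacent vertices. -/
def IsCycleMap (G : SimpleGraph V) {n : ℕ} (f : ZMod n → V) : Prop :=
  3 ≤ n ∧ Function.Injective f ∧ ∀ i, G.Adj (f i) (f (i + 1))

/-- The set of chords of the cycle given by `f`: edges of `G` joining two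
non-consecutive vertices of the cycle. -/
def chordSet (G : SimpleGraph V) {n : ℕ} (f : ZMod n → V) : Set (Sym2 V) :=
  {e | ∃ i j : ZMod n, e = s(f i, f j) ∧ G.Adj (f i) (f j) ∧ j ≠ i + 1 ∧ i ≠ j + 1}

/-- `G` has a cycle with exactly `k` chords. -/
def HasCycleWithChords (G : SimpleGraph V) (k : ℕ) : Prop :=
  ∃ (n : ℕ) (f : ZMod n → V), IsCycleMap G f ∧ (chordSet G f).ncard = k

/-- `G` has a V-cycle: a cycle with exactly two chords, sharing an endpoint. -/
def HasVCycle (G : SimpleGraph V) : Prop :=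
  ∃ (n : ℕ) (f : ZMod n → V), IsCycleMap G f ∧
    ∃ x y z : V, y ≠ z ∧ chordSet G f = {s(x, y), s(x, z)}

/-- `G` has an X-cycle: a cycle with exactly two chords `a₁a₂`, `b₁b₂` with pairwise
distinct endpoints appearing in the order `a₁, b₁, a₂, b₂` along the cycle. -/
def HasXCycle (G : SimpleGraph V) : Prop :=
  ∃ (n : ℕ) (f : ZMod n → V), IsCycleMap G f ∧
    ∃ i₁ i₂ i₃ i₄ : ZMod n, i₁.val < i₂.val ∧ i₂.val < i₃.val ∧ i₃.val < i₄.val ∧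
      chordSet G f = {s(f i₁, f i₃), s(f i₂, f i₄)}

/-- `G` is a complete tripartite graph: the vertices can be partitioned into three
nonempty independent sets, with all edges between different parts. -/
def IsCompleteTripartite (G : SimpleGraph V) : Prop :=
  ∃ p : V → Fin 3, Function.Surjective p ∧ ∀ x y, G.Adj x y ↔ p x ≠ p y

/-- `G` has a clique cutset: a set of pairwise adjacent vertices whose removal
disconnects `G`. -/
def HasCliqueCutset (G : SimpleGraph V) : Prop :=
  ∃ S : Set V, G.IsClique S ∧ ¬ (G.induce (Sᶜ : Set V)).Preconnected

/-- `G` is diamond-free: it has no induced `K₄` minus an edge. -/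
def DiamondFree (G : SimpleGraph V) : Prop :=
  ¬ ∃ a b c d : V, c ≠ d ∧ G.Adj a b ∧ G.Adj a c ∧ G.Adj a d ∧
      G.Adj b c ∧ G.Adj b d ∧ ¬ G.Adj c d

namespace TC


/-- linear chord set -/
def linChords (G : SimpleGraph V) (n : ℕ) (g : ℕ → V) : Set (Sym2 V) :=
  {e | ∃ k l : ℕ, k < l ∧ l < n ∧ l ≠ k + 1 ∧ ¬(k = 0 ∧ l = n - 1) ∧
      G.Adj (g k) (g l) ∧ e = s(g k, g l)}

theorem master (G : SimpleGraph V) (n : ℕ) (hn : 3 ≤ n) (g : ℕ → V)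
    (hinj : ∀ k l, k < n → l < n → g k = g l → k = l)
    (hadj : ∀ k, k + 1 < n → G.Adj (g k) (g (k + 1)))
    (hclose : G.Adj (g (n - 1)) (g 0)) :
    IsCycleMap G (fun i : ZMod n => g i.val) ∧
      chordSet G (fun i : ZMod n => g i.val) = linChords G n g := by
  haveI : NeZero n := ⟨by omega⟩
  haveI : Fact (1 < n) := ⟨by omega⟩
  have hv1 : ∀ i : ZMod n, (i + 1).val = (i.val + 1) % n := by
    intro i
    rw [ZMod.val_add, ZMod.val_one]
  have hvlt : ∀ i : ZMod n, i.val < n := fun i => ZMod.val_lt i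
  constructor
  · refine ⟨hn, ?_, ?_⟩
    · intro i j hij
      exact ZMod.val_injective n (hinj _ _ (hvlt i) (hvlt j) hij)
    · intro i
      simp only [hv1]
      rcases Nat.lt_or_ge (i.val + 1) n with h | h
      · rw [Nat.mod_eq_of_lt h]
        exact hadj _ h
      · have : i.val = n - 1 := by have := hvlt i; omega
        rw [this]
        have : (n - 1 + 1) % n = 0 := by
          have : n - 1 + 1 = n := by omega
          simp [this]
        rw [this]
        exact hclose
  · ext e
    constructor
    · rintro ⟨i, j, rfl, hadjij, hj, hi⟩
      have hik := hvlt i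
      have hjk := hvlt j
      rcases Nat.lt_trichotomy i.val j.val with h | h | h
      · refine ⟨i.val, j.val, h, hjk, ?_, ?_, hadjij, rfl⟩
        · intro hEq
          apply hj
          apply ZMod.val_injective n
          rw [hv1, hEq, Nat.mod_eq_of_lt (by omega)]
        · rintro ⟨h0, hl⟩
          apply hi
          apply ZMod.val_injective n
          rw [hv1, hl, h0]
          have : n - 1 + 1 = n := by omega
          simp [this]
      · exact absurd hadjij (by rw [show i = j from ZMod.val_injective n h]; simp)
      · refine ⟨j.val, i.val, h, hik, ?_, ?_, hadjij.symm, Sym2.eq_swap⟩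
        · intro hEq
          apply hi
          apply ZMod.val_injective n
          rw [hv1, hEq, Nat.mod_eq_of_lt (by omega)]
        · rintro ⟨h0, hl⟩
          apply hj
          apply ZMod.val_injective n
          rw [hv1, hl, h0]
          have : n - 1 + 1 = n := by omega
          simp [this]
    · rintro ⟨k, l, hkl, hln, hlk1, hk0, hadjkl, rfl⟩
      refine ⟨(k : ZMod n), (l : ZMod n), ?_, ?_, ?_, ?_⟩
      · show s(g k, g l) = s(g ((k : ZMod n)).val, g ((l : ZMod n)).val)
        rw [ZMod.val_cast_of_lt (show k < n by omega), ZMod.val_cast_of_lt hln]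
      · show G.Adj (g ((k : ZMod n)).val) (g ((l : ZMod n)).val)
        rw [ZMod.val_cast_of_lt (show k < n by omega), ZMod.val_cast_of_lt hln]
        exact hadjkl
      · intro hEq
        have := congrArg ZMod.val hEq
        rw [hv1, ZMod.val_cast_of_lt hln, ZMod.val_cast_of_lt (show k < n by omega)]
          at this
        rcases Nat.lt_or_ge (k + 1) n with h | h
        · rw [Nat.mod_eq_of_lt h] at this; omega
        · have hk : k = n - 1 := by omega
          omega
      · intro hEq
        have := congrArg ZMod.val hEq
        rw [hv1, ZMod.val_cast_of_lt hln, ZMod.val_cast_of_lt (show k < n by omega)]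
          at this
        rcases Nat.lt_or_ge (l + 1) n with h | h
        · rw [Nat.mod_eq_of_lt h] at this; omega
        · have hl : l + 1 = n := by omega
          rw [hl, Nat.mod_self] at this
          exact hk0 ⟨by omega, by omega⟩
  

theorem genX (G : SimpleGraph V) (L : ℕ) (hL : 1 ≤ L) (x : ℕ → V) (A B : V)
    (hadj : ∀ i, i < L → G.Adj (x i) (x (i + 1)))
    (hind : ∀ i j, i + 1 < j → j ≤ L → ¬ G.Adj (x i) (x j))
    (hinj : ∀ i j, i ≤ L → j ≤ L → x i = x j → i = j)
    (hAx : ∀ i, i ≤ L → A ≠ x i) (hBx : ∀ i, i ≤ L → B ≠ x i) (hAB : A ≠ B)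
    (e1 : G.Adj (x L) A) (e2 : G.Adj A B) (e3 : G.Adj B (x 0))
    (c1 : G.Adj (x 0) A) (c2 : G.Adj (x L) B)
    (nA : ∀ i, 0 < i → i < L → ¬ G.Adj A (x i))
    (nB : ∀ i, 0 < i → i < L → ¬ G.Adj B (x i)) : HasXCycle G := by
  set n := L + 3 with hn
  set g : ℕ → V := fun k => if k ≤ L then x k else if k = L + 1 then A else B with hg
  have gp : ∀ k, k ≤ L → g k = x k := by intro k hk; simp [hg, hk]
  have gA : g (L + 1) = A := by simp [hg]
  have gB : g (L + 2) = B := by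
    have h1 : ¬ (L + 2 ≤ L) := by omega
    have h2 : L + 2 ≠ L + 1 := by omega
    simp [hg, h1, h2]
  have hmaster := master G n (by omega) g
    (by -- injective
      intro k l hk hl hEq
      by_cases hkL : k ≤ L <;> by_cases hlL : l ≤ L
      · exact hinj k l hkL hlL (by rwa [gp k hkL, gp l hlL] at hEq)
      · have hl2 : l = L + 1 ∨ l = L + 2 := by omega
        rcases hl2 with rfl | rfl
        · rw [gp k hkL, gA] at hEq; exact absurd hEq.symm (hAx k hkL)
        · rw [gp k hkL, gB] at hEq; exact absurd hEq.symm (hBx k hkL)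
      · have hk2 : k = L + 1 ∨ k = L + 2 := by omega
        rcases hk2 with rfl | rfl
        · rw [gp l hlL, gA] at hEq; exact absurd hEq (hAx l hlL)
        · rw [gp l hlL, gB] at hEq; exact absurd hEq (hBx l hlL)
      · have hk2 : k = L + 1 ∨ k = L + 2 := by omega
        have hl2 : l = L + 1 ∨ l = L + 2 := by omega
        rcases hk2 with rfl | rfl <;> rcases hl2 with rfl | rfl
        · rfl
        · rw [gA, gB] at hEq; exact absurd hEq hAB
        · rw [gA, gB] at hEq; exact absurd hEq.symm hAB
        · rfl)
    (by -- adjacency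
      intro k hk
      by_cases h1 : k + 1 ≤ L
      · rw [gp k (by omega), gp (k+1) h1]; exact hadj k (by omega)
      · have : k = L ∨ k = L + 1 := by omega
        rcases this with h | h
        · rw [h, gp L (le_refl L), gA]; exact e1
        · rw [h, gA, gB]; exact e2)
    (by -- close
      have : n - 1 = L + 2 := by omega
      rw [this, gB, gp 0 (by omega)]; exact e3)
  obtain ⟨hcyc, hchord⟩ := hmaster
  have hlin : linChords G n g = {s(x 0, A), s(x L, B)} := by
    ext e
    constructor
    · rintro ⟨k, l, hkl, hln, hlk1, hk0, hadjkl, rfl⟩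
      have hl3 : l ≤ L ∨ l = L + 1 ∨ l = L + 2 := by omega
      rcases hl3 with hlL | rfl | rfl
      · rw [gp k (by omega), gp l hlL] at hadjkl
        exact absurd hadjkl (hind k l (by omega) hlL)
      · have hkL : k ≤ L := by omega
        have hkL' : k ≠ L := by omega
        rcases Nat.eq_zero_or_pos k with rfl | hkpos
        · left; rw [gp 0 (by omega), gA]
        · rw [gp k hkL, gA] at hadjkl
          exact absurd hadjkl.symm (nA k hkpos (by omega))
      · have hkL : k ≤ L := by omega
        rcases Nat.eq_zero_or_pos k with rfl | hkpos
        · exact absurd ⟨rfl, by omega⟩ hk0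
        · by_cases hkL' : k = L
          · right; rw [hkL', gp L (le_refl L), gB]; exact rfl
          · rw [gp k hkL, gB] at hadjkl
            exact absurd hadjkl.symm (nB k hkpos (by omega))
    · rintro (rfl | rfl)
      · exact ⟨0, L + 1, by omega, by omega, by omega, by omega,
          by rw [gp 0 (by omega), gA]; exact c1, by rw [gp 0 (by omega), gA]⟩
      · exact ⟨L, L + 2, by omega, by omega, by omega, by omega,
          by rw [gp L (le_refl L), gB]; exact c2, by rw [gp L (le_refl L), gB]⟩
  haveI : NeZero n := ⟨by omega⟩
  refine ⟨n, _, hcyc, ((0 : ℕ) : ZMod n), ((L : ℕ) : ZMod n), ((L + 1 : ℕ) : ZMod n),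
    ((L + 2 : ℕ) : ZMod n), ?_, ?_, ?_, ?_⟩
  · rw [ZMod.val_cast_of_lt (by omega), ZMod.val_cast_of_lt (show L < n by omega)]; omega
  · rw [ZMod.val_cast_of_lt (show L < n by omega), ZMod.val_cast_of_lt (by omega)]; omega
  · rw [ZMod.val_cast_of_lt (show L + 1 < n by omega), ZMod.val_cast_of_lt (by omega)]; omega
  · rw [hchord, hlin]
    have f0 : g ((((0 : ℕ)) : ZMod n)).val = x 0 := by
      rw [ZMod.val_cast_of_lt (by omega)]; exact gp 0 (by omega)
    have fL : g (((L : ℕ) : ZMod n)).val = x L := by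
      rw [ZMod.val_cast_of_lt (show L < n by omega)]; exact gp L (le_refl L)
    have fA : g (((L + 1 : ℕ) : ZMod n)).val = A := by
      rw [ZMod.val_cast_of_lt (show L + 1 < n by omega)]; exact gA
    have fB : g (((L + 2 : ℕ) : ZMod n)).val = B := by
      rw [ZMod.val_cast_of_lt (show L + 2 < n by omega)]; exact gB
    rw [f0, fL, fA, fB]

theorem genV (G : SimpleGraph V) (L : ℕ) (hL : 1 ≤ L) (x : ℕ → V) (A B C : V)
    (hadj : ∀ i, i < L → G.Adj (x i) (x (i + 1)))
    (hind : ∀ i j, i + 1 < j → j ≤ L → ¬ G.Adj (x i) (x j))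
    (hinj : ∀ i j, i ≤ L → j ≤ L → x i = x j → i = j)
    (hAx : ∀ i, i ≤ L → A ≠ x i) (hBx : ∀ i, i ≤ L → B ≠ x i) (hCx : ∀ i, i ≤ L → C ≠ x i)
    (hAB : A ≠ B) (hAC : A ≠ C) (hBC : B ≠ C)
    (e1 : G.Adj (x L) A) (e2 : G.Adj A B) (e3 : G.Adj B C) (e4 : G.Adj C (x 0))
    (c1 : G.Adj (x 0) A) (c2 : G.Adj A C)
    (nA : ∀ i, 0 < i → i < L → ¬ G.Adj A (x i))
    (nB : ∀ i, i ≤ L → ¬ G.Adj B (x i))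
    (nC : ∀ i, 1 ≤ i → i ≤ L → ¬ G.Adj C (x i)) : HasVCycle G := by
  set n := L + 4 with hn
  set g : ℕ → V := fun k => if k ≤ L then x k else if k = L + 1 then A else
    if k = L + 2 then B else C with hg
  have gp : ∀ k, k ≤ L → g k = x k := by intro k hk; simp [hg, hk]
  have gA : g (L + 1) = A := by simp [hg]
  have gB : g (L + 2) = B := by
    have h1 : ¬ (L + 2 ≤ L) := by omega
    have h2 : L + 2 ≠ L + 1 := by omega
    simp [hg, h1, h2]
  have gC : g (L + 3) = C := by
    have h1 : ¬ (L + 3 ≤ L) := by omega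
    have h2 : L + 3 ≠ L + 1 := by omega
    have h3 : L + 3 ≠ L + 2 := by omega
    simp [hg, h1, h2, h3]
  have hmaster := master G n (by omega) g
    (by
      intro k l hk hl hEq
      have hk4 : k ≤ L ∨ k = L + 1 ∨ k = L + 2 ∨ k = L + 3 := by omega
      have hl4 : l ≤ L ∨ l = L + 1 ∨ l = L + 2 ∨ l = L + 3 := by omega
      rcases hk4 with hkL | rfl | rfl | rfl <;> rcases hl4 with hlL | rfl | rfl | rfl
      · exact hinj k l hkL hlL (by rwa [gp k hkL, gp l hlL] at hEq)
      · rw [gp k hkL, gA] at hEq; exact absurd hEq.symm (hAx k hkL)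
      · rw [gp k hkL, gB] at hEq; exact absurd hEq.symm (hBx k hkL)
      · rw [gp k hkL, gC] at hEq; exact absurd hEq.symm (hCx k hkL)
      · rw [gp l hlL, gA] at hEq; exact absurd hEq (hAx l hlL)
      · rfl
      · rw [gA, gB] at hEq; exact absurd hEq hAB
      · rw [gA, gC] at hEq; exact absurd hEq hAC
      · rw [gp l hlL, gB] at hEq; exact absurd hEq (hBx l hlL)
      · rw [gA, gB] at hEq; exact absurd hEq.symm hAB
      · rfl
      · rw [gB, gC] at hEq; exact absurd hEq hBC
      · rw [gp l hlL, gC] at hEq; exact absurd hEq (hCx l hlL)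
      · rw [gA, gC] at hEq; exact absurd hEq.symm hAC
      · rw [gB, gC] at hEq; exact absurd hEq.symm hBC
      · rfl)
    (by
      intro k hk
      by_cases h1 : k + 1 ≤ L
      · rw [gp k (by omega), gp (k+1) h1]; exact hadj k (by omega)
      · have : k = L ∨ k = L + 1 ∨ k = L + 2 := by omega
        rcases this with h | h | h
        · rw [h, gp L (le_refl L), gA]; exact e1
        · rw [h, gA, gB]; exact e2
        · rw [h, gB, gC]; exact e3)
    (by
      have : n - 1 = L + 3 := by omega
      rw [this, gC, gp 0 (by omega)]; exact e4)
  obtain ⟨hcyc, hchord⟩ := hmaster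
  have hlin : linChords G n g = {s(A, x 0), s(A, C)} := by
    ext e
    constructor
    · rintro ⟨k, l, hkl, hln, hlk1, hk0, hadjkl, rfl⟩
      have hl4 : l ≤ L ∨ l = L + 1 ∨ l = L + 2 ∨ l = L + 3 := by omega
      rcases hl4 with hlL | rfl | rfl | rfl
      · rw [gp k (by omega), gp l hlL] at hadjkl
        exact absurd hadjkl (hind k l (by omega) hlL)
      · have hkL : k ≤ L := by omega
        rcases Nat.eq_zero_or_pos k with rfl | hkpos
        · left; rw [gp 0 (by omega), gA]; exact Sym2.eq_swap
        · rw [gp k hkL, gA] at hadjkl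
          exact absurd hadjkl.symm (nA k hkpos (by omega))
      · have hkL : k ≤ L := by omega
        rw [gp k hkL, gB] at hadjkl
        exact absurd hadjkl.symm (nB k hkL)
      · have hkL : k ≤ L ∨ k = L + 1 ∨ k = L + 2 := by omega
        rcases hkL with hkL | rfl | rfl
        · rcases Nat.eq_zero_or_pos k with rfl | hkpos
          · exact absurd ⟨rfl, by omega⟩ hk0
          · rw [gp k hkL, gC] at hadjkl
            exact absurd hadjkl.symm (nC k hkpos hkL)
        · right; rw [gA, gC]; exact rfl
        · exact absurd rfl (by omega : L + 3 ≠ L + 2 + 1)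
    · rintro (rfl | rfl)
      · exact ⟨0, L + 1, by omega, by omega, by omega, by omega,
          by rw [gp 0 (by omega), gA]; exact c1,
          by rw [gp 0 (by omega), gA]; exact Sym2.eq_swap⟩
      · exact ⟨L + 1, L + 3, by omega, by omega, by omega, by omega,
          by rw [gA, gC]; exact c2, by rw [gA, gC]⟩
  refine ⟨n, _, hcyc, A, x 0, C, fun h => (hCx 0 (by omega)) h.symm, by rw [hchord, hlin]⟩


section Local
variable {G : SimpleGraph V} (hX : ¬ HasXCycle G) (hV : ¬ HasVCycle G)
include hX hV
set_option linter.unusedSectionVars false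

/-- `G` contains no `K₄`. -/
theorem lemK4 {a b c d : V} (hab : G.Adj a b) (hac : G.Adj a c) (had : G.Adj a d)
    (hbc : G.Adj b c) (hbd : G.Adj b d) (hcd : G.Adj c d) : False := by
  apply hX
  refine genX G 1 le_rfl (fun i => if i = 0 then a else b) c d ?_ ?_ ?_ ?_ ?_ ?_ ?_ ?_ ?_ ?_ ?_ ?_ ?_
  · intro i hi; interval_cases i; simpa using hab
  · intro i j h1 h2 _; omega
  · intro i j hi hj h
    by_cases hi0 : i = 0 <;> by_cases hj0 : j = 0
    · omega
    · exfalso; simp only [hi0, hj0, reduceIte] at h; exact hab.ne h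
    · exfalso; simp only [hi0, hj0, reduceIte] at h; exact hab.ne h.symm
    · omega
  · intro i _; by_cases h : i = 0 <;> simp [h, hac.ne', hbc.ne']
  · intro i _; by_cases h : i = 0 <;> simp [h, had.ne', hbd.ne']
  · exact hcd.ne
  · simpa using hbc
  · exact hcd
  · simpa using had.symm
  · simpa using hac
  · simpa using hbd
  · intro i h1 h2; omega
  · intro i h1 h2; omega

/-- In a diamond `(u,v;p,q)`, no external vertex sees `p` and `q` but neither `u` nor `v`. -/
theorem dpq {u v p q z : V} (huv : G.Adj u v) (hup : G.Adj u p) (huq : G.Adj u q)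
    (hvp : G.Adj v p) (hvq : G.Adj v q) (hpqn : ¬ G.Adj p q) (hpq : p ≠ q)
    (hzu' : z ≠ u) (hzv' : z ≠ v)
    (hzp : G.Adj z p) (hzq : G.Adj z q) (hnu : ¬ G.Adj z u) (hnv : ¬ G.Adj z v) : False := by
  apply hX
  refine genX G 2 (by omega) (fun i => if i = 0 then p else if i = 1 then z else q) u v
    ?_ ?_ ?_ ?_ ?_ ?_ ?_ ?_ ?_ ?_ ?_ ?_ ?_
  · intro i hi; interval_cases i
    · simpa using hzp.symm
    · simpa using hzq
  · intro i j h1 h2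
    have : i = 0 ∧ j = 2 := by omega
    obtain ⟨rfl, rfl⟩ := this
    simpa using hpqn
  · intro i j hi hj h
    interval_cases i <;> interval_cases j <;>
      simp only [reduceIte] at h <;>
      first
        | rfl
        | exact absurd h hzp.ne' | exact absurd h.symm hzp.ne'
        | exact absurd h hpq | exact absurd h.symm hpq
        | exact absurd h hzq.ne | exact absurd h.symm hzq.ne
  · intro i hi; interval_cases i <;>
      (try simp only [reduceIte]) <;>
      first
        | exact hup.ne | exact fun hh => hzu' hh.symm | exact huq.ne
  · intro i hi; interval_cases i <;>
      (try simp only [reduceIte]) <;>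
      first
        | exact hvp.ne | exact fun hh => hzv' hh.symm | exact hvq.ne
  · exact huv.ne
  · simpa using huq.symm
  · exact huv
  · simpa using hvp
  · simpa using hup.symm
  · simpa using hvq.symm
  · intro i h1 h2
    have : i = 1 := by omega
    subst this
    simp only [reduceIte]
    exact fun h => hnu h.symm
  · intro i h1 h2
    have : i = 1 := by omega
    subst this
    simp only [reduceIte]
    exact fun h => hnv h.symm

theorem dcrossV {u v p q z : V} (huv : G.Adj u v) (hup : G.Adj u p) (huq : G.Adj u q)
    (hvp : G.Adj v p) (hvq : G.Adj v q) (hpqn : ¬ G.Adj p q) (hpq : p ≠ q)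
    (hzq' : z ≠ q) (hzv' : z ≠ v)
    (hzp : G.Adj z p) (hzu : G.Adj z u) (hnq : ¬ G.Adj z q) (hnv : ¬ G.Adj z v) : False := by
  apply hV
  refine genV G 1 le_rfl (fun i => if i = 0 then p else z) u q v
    ?_ ?_ ?_ ?_ ?_ ?_ ?_ ?_ ?_ ?_ ?_ ?_ ?_ ?_ ?_ ?_ ?_ ?_
  · intro i hi; interval_cases i; simpa using hzp.symm
  · intro i j h1 h2 _; omega
  · intro i j hi hj h
    by_cases hi0 : i = 0 <;> by_cases hj0 : j = 0
    · omega
    · exfalso; simp only [hi0, hj0, reduceIte] at h; exact hzp.ne' h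
    · exfalso; simp only [hi0, hj0, reduceIte] at h; exact hzp.ne' h.symm
    · omega
  · intro i _; by_cases h : i = 0 <;> simp [h]
    · exact hup.ne
    · exact hzu.ne'
  · intro i _; by_cases h : i = 0 <;> simp [h]
    · exact fun hh => hpq hh.symm
    · exact fun hh => hzq' hh.symm
  · intro i _; by_cases h : i = 0 <;> simp [h]
    · exact hvp.ne
    · exact fun hh => hzv' hh.symm
  · exact huq.ne
  · exact huv.ne
  · exact hvq.ne'
  · simpa using hzu
  · exact huq
  · exact hvq.symm
  · simpa using hvp
  · simpa using hup.symm
  · exact huv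
  · intro i h1 h2; omega
  · intro i hi; interval_cases i
    · simpa using fun h => hpqn h.symm
    · simpa using fun h => hnq h.symm
  · intro i h1 h2; interval_cases i; simpa using fun h => hnv h.symm

/-- If `z` sees two adjacent vertices `u`, `p` of a diamond, it sees `q` too. -/
theorem dcross {u v p q z : V} (huv : G.Adj u v) (hup : G.Adj u p) (huq : G.Adj u q)
    (hvp : G.Adj v p) (hvq : G.Adj v q) (hpqn : ¬ G.Adj p q) (hpq : p ≠ q)
    (hzv' : z ≠ v) (hzq' : z ≠ q)
    (hzu : G.Adj z u) (hzp : G.Adj z p) : G.Adj z q := by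
  by_contra hnq
  by_cases hzv : G.Adj z v
  · exact lemK4 hX hV hzu hzv hzp huv hup hvp
  · exact dcrossV hX hV huv hup huq hvp hvq hpqn hpq hzq' hzv' hzp hzu hnq hzv

/-- `z` cannot see `u`, `v` and `p` (K₄-freeness). -/
theorem duv {u v p z : V} (huv : G.Adj u v) (hup : G.Adj u p) (hvp : G.Adj v p)
    (hzu : G.Adj z u) (hzv : G.Adj z v) : ¬ G.Adj z p :=
  fun hzp => lemK4 hX hV hzu hzv hzp huv hup hvp

/-- If `z` sees `p`,`q` and not `u`, then it sees `v`. -/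
theorem dpq' {u v p q z : V} (huv : G.Adj u v) (hup : G.Adj u p) (huq : G.Adj u q)
    (hvp : G.Adj v p) (hvq : G.Adj v q) (hpqn : ¬ G.Adj p q) (hpq : p ≠ q)
    (hzu' : z ≠ u) (hzv' : z ≠ v)
    (hzp : G.Adj z p) (hzq : G.Adj z q) (hnu : ¬ G.Adj z u) : G.Adj z v := by
  by_contra hnv
  exact dpq hX hV huv hup huq hvp hvq hpqn hpq hzu' hzv' hzp hzq hnu hnv

end Local


section Struct
variable (G : SimpleGraph V) [DecidableEq V]

/-- A complete tripartite configuration. -/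
def Good (A B C : Finset V) : Prop :=
  A.Nonempty ∧ B.Nonempty ∧ C.Nonempty ∧
  (∀ x ∈ A, ∀ y ∈ A, ¬ G.Adj x y) ∧ (∀ x ∈ B, ∀ y ∈ B, ¬ G.Adj x y) ∧
  (∀ x ∈ C, ∀ y ∈ C, ¬ G.Adj x y) ∧
  (∀ x ∈ A, ∀ y ∈ B, G.Adj x y) ∧ (∀ x ∈ A, ∀ y ∈ C, G.Adj x y) ∧
  (∀ x ∈ B, ∀ y ∈ C, G.Adj x y)

theorem good_swap12 {A B C : Finset V} (h : Good G A B C) : Good G B A C := by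
  obtain ⟨h1, h2, h3, h4, h5, h6, h7, h8, h9⟩ := h
  exact ⟨h2, h1, h3, h5, h4, h6, fun x hx y hy => (h7 y hy x hx).symm, h9, h8⟩

theorem good_rot {A B C : Finset V} (h : Good G A B C) : Good G B C A := by
  obtain ⟨h1, h2, h3, h4, h5, h6, h7, h8, h9⟩ := h
  exact ⟨h2, h3, h1, h5, h6, h4, h9, fun x hx y hy => (h7 y hy x hx).symm,
    fun x hx y hy => (h8 y hy x hx).symm⟩

/-- The first part cannot be extended by an outside vertex. -/
def NoExt (A B C : Finset V) : Prop :=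
  ∀ z, z ∉ A ∪ B ∪ C →
    ¬ ((∀ y ∈ A, ¬ G.Adj z y) ∧ (∀ y ∈ B, G.Adj z y) ∧ (∀ y ∈ C, G.Adj z y))

theorem noExt_swap {A B C : Finset V} (h : NoExt G A B C) : NoExt G A C B := by
  intro z hz hk
  apply h z (by simp only [Finset.mem_union] at hz ⊢; tauto)
  exact ⟨hk.1, hk.2.2, hk.2.1⟩

/-- An outside walk between two nonadjacent vertices of `T`. -/
def Bad (T : Finset V) (n : ℕ) : Prop :=
  ∃ t1 ∈ T, ∃ t2 ∈ T, t1 ≠ t2 ∧ ¬ G.Adj t1 t2 ∧ ∃ z : ℕ → V,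
    z 0 = t1 ∧ z n = t2 ∧ (∀ i, i < n → G.Adj (z i) (z (i + 1))) ∧
    (∀ i, 0 < i → i < n → z i ∉ T)

/-- splicing out a segment of a walk -/
def splice (z : ℕ → V) (i d : ℕ) : ℕ → V := fun k => if k ≤ i then z k else z (k + d)

theorem splice_le (z : ℕ → V) (i d k : ℕ) (h : k ≤ i) : splice z i d k = z k := by
  simp [splice, h]

theorem splice_gt (z : ℕ → V) (i d k : ℕ) (h : ¬ k ≤ i) : splice z i d k = z (k + d) := by
  simp [splice, h]

theorem bad_of_dup {T : Finset V} {n : ℕ} {t1 t2 : V} {z : ℕ → V}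
    (ht1 : t1 ∈ T) (ht2 : t2 ∈ T) (hne : t1 ≠ t2) (hnadj : ¬ G.Adj t1 t2)
    (hz0 : z 0 = t1) (hzn : z n = t2) (hzadj : ∀ i, i < n → G.Adj (z i) (z (i + 1)))
    (hzout : ∀ i, 0 < i → i < n → z i ∉ T)
    (i j : ℕ) (hij : i < j) (hjn : j ≤ n) (hnot : ¬ (i = 0 ∧ j = n))
    (hdup : z i = z j) : Bad G T (n - (j - i)) := by
  refine ⟨t1, ht1, t2, ht2, hne, hnadj, splice z i (j - i), ?_, ?_, ?_, ?_⟩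
  · rw [splice_le z i _ 0 (by omega)]; exact hz0
  · by_cases h : n - (j - i) ≤ i
    · have h1 : j = n := by omega
      have h2 : n - (j - i) = i := by omega
      rw [h2, splice_le z i _ i le_rfl, hdup, h1, hzn]
    · rw [splice_gt z i _ _ h]
      have : n - (j - i) + (j - i) = n := by omega
      rw [this, hzn]
  · intro k hk
    rcases Nat.lt_trichotomy k i with h | h | h
    · rw [splice_le z i _ k (by omega), splice_le z i _ (k + 1) (by omega)]
      exact hzadj k (by omega)
    · subst h
      rw [splice_le z k _ k le_rfl, splice_gt z k _ (k + 1) (by omega)]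
      have h3 : k + 1 + (j - k) = j + 1 := by omega
      rw [h3, hdup]
      exact hzadj j (by omega)
    · rw [splice_gt z i _ k (by omega), splice_gt z i _ (k + 1) (by omega)]
      have h3 : k + 1 + (j - i) = k + (j - i) + 1 := by omega
      rw [h3]
      exact hzadj _ (by omega)
  · intro k hk1 hk2
    by_cases h : k ≤ i
    · rw [splice_le z i _ k h]
      exact hzout k hk1 (by omega)
    · rw [splice_gt z i _ k h]
      exact hzout _ (by omega) (by omega)

theorem bad_of_chord {T : Finset V} {n : ℕ} {t1 t2 : V} {z : ℕ → V}
    (ht1 : t1 ∈ T) (ht2 : t2 ∈ T) (hne : t1 ≠ t2) (hnadj : ¬ G.Adj t1 t2)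
    (hz0 : z 0 = t1) (hzn : z n = t2) (hzadj : ∀ i, i < n → G.Adj (z i) (z (i + 1)))
    (hzout : ∀ i, 0 < i → i < n → z i ∉ T)
    (i j : ℕ) (hij : i + 1 < j) (hjn : j ≤ n)
    (hchord : G.Adj (z i) (z j)) : Bad G T (n - (j - i - 1)) := by
  refine ⟨t1, ht1, t2, ht2, hne, hnadj, splice z i (j - i - 1), ?_, ?_, ?_, ?_⟩
  · rw [splice_le z i _ 0 (by omega)]; exact hz0
  · rw [splice_gt z i _ _ (by omega)]
    have : n - (j - i - 1) + (j - i - 1) = n := by omega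
    rw [this, hzn]
  · intro k hk
    rcases Nat.lt_trichotomy k i with h | h | h
    · rw [splice_le z i _ k (by omega), splice_le z i _ (k + 1) (by omega)]
      exact hzadj k (by omega)
    · subst h
      rw [splice_le z k _ k le_rfl, splice_gt z k _ (k + 1) (by omega)]
      have h3 : k + 1 + (j - k - 1) = j := by omega
      rw [h3]
      exact hchord
    · rw [splice_gt z i _ k (by omega), splice_gt z i _ (k + 1) (by omega)]
      have h3 : k + 1 + (j - i - 1) = k + (j - i - 1) + 1 := by omega
      rw [h3]
      exact hzadj _ (by omega)
  · intro k hk1 hk2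
    by_cases h : k ≤ i
    · rw [splice_le z i _ k h]
      exact hzout k hk1 (by omega)
    · rw [splice_gt z i _ k h]
      exact hzout _ (by omega) (by omega)

/-- Extraction of a minimal induced outside path. -/
theorem extract {T : Finset V} (hex : ∃ n, Bad G T n) :
    ∃ (n : ℕ) (t1 t2 : V) (z : ℕ → V), 2 ≤ n ∧ t1 ∈ T ∧ t2 ∈ T ∧ t1 ≠ t2 ∧
      ¬ G.Adj t1 t2 ∧ z 0 = t1 ∧ z n = t2 ∧ (∀ i, i < n → G.Adj (z i) (z (i + 1))) ∧
      (∀ i, 0 < i → i < n → z i ∉ T) ∧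
      (∀ i j, i + 1 < j → j ≤ n → ¬ G.Adj (z i) (z j)) ∧
      (∀ i j, i ≤ n → j ≤ n → z i = z j → i = j) ∧
      (∀ m, m < n → ¬ Bad G T m) := by
  classical
  obtain ⟨n, hbad, hmin⟩ : ∃ n, Bad G T n ∧ ∀ m, m < n → ¬ Bad G T m := by
    have h := Nat.find_spec hex
    exact ⟨Nat.find hex, h, fun m hm => Nat.find_min hex hm⟩
  obtain ⟨t1, ht1, t2, ht2, hne, hnadj, z, hz0, hzn, hzadj, hzout⟩ := hbad
  have hn2 : 2 ≤ n := by
    by_contra h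
    interval_cases n
    · exact hne (hz0.symm.trans hzn)
    · apply hnadj
      have h1 := hzadj 0 (by omega)
      rwa [hz0, show (0 + 1 : ℕ) = 1 from rfl, hzn] at h1
  have hind : ∀ i j, i + 1 < j → j ≤ n → ¬ G.Adj (z i) (z j) := by
    intro i j h1 h2 hadj
    by_cases h : i = 0 ∧ j = n
    · rw [h.1, h.2, hz0, hzn] at hadj
      exact hnadj hadj
    · have hb := bad_of_chord G ht1 ht2 hne hnadj hz0 hzn hzadj hzout i j h1 h2 hadj
      exact hmin _ (by omega) hb
  have hinj : ∀ i j, i ≤ n → j ≤ n → z i = z j → i = j := by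
    have key : ∀ i j, i < j → j ≤ n → z i = z j → False := by
      intro i j h1 h2 heq
      by_cases h : i = 0 ∧ j = n
      · rw [h.1, h.2, hz0, hzn] at heq
        exact hne heq
      · have hb := bad_of_dup G ht1 ht2 hne hnadj hz0 hzn hzadj hzout i j h1 h2 h heq
        exact hmin _ (by omega) hb
    intro i j hi hj heq
    rcases Nat.lt_trichotomy i j with h | h | h
    · exact absurd heq (fun hh => key i j h hj hh)
    · exact h
    · exact absurd heq.symm (fun hh => key j i h hi hh)
  exact ⟨n, t1, t2, z, hn2, ht1, ht2, hne, hnadj, hz0, hzn, hzadj, hzout, hind, hinj, hmin⟩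

end Struct


section Main
variable {G : SimpleGraph V} [DecidableEq V] (hX : ¬ HasXCycle G) (hV : ¬ HasVCycle G)
set_option linter.unusedSectionVars false
include hX hV

/-- A vertex outside `T` adjacent to `t ∈ P` but not to `t' ∈ P` has no other
neighbour in `T`. -/
theorem endpointNbhd {P Q R T : Finset V} (hG : Good G P Q R)
    (hT : ∀ x, x ∈ T ↔ x ∈ P ∪ Q ∪ R)
    {t t' s : V} (ht : t ∈ P) (ht' : t' ∈ P) (htt' : t ≠ t')
    (hs : s ∉ T) (h1 : G.Adj s t) (h2 : ¬ G.Adj s t') :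
    ∀ w ∈ T, G.Adj s w → w = t := by
  obtain ⟨hPne, hQne, hRne, hPind, hQind, hRind, hPQ, hPR, hQR⟩ := hG
  obtain ⟨u0, hu0⟩ := hQne
  obtain ⟨v0, hv0⟩ := hRne
  have hsT : ∀ y ∈ T, s ≠ y := fun y hy h => hs (h ▸ hy)
  have crossQ : ∀ w ∈ Q, G.Adj s w → False := by
    intro w hw hadj
    have := dcross hX hV (u := w) (v := v0) (p := t) (q := t') (z := s)
      (hQR w hw v0 hv0) ((hPQ t ht w hw).symm) ((hPQ t' ht' w hw).symm)
      ((hPR t ht v0 hv0).symm) ((hPR t' ht' v0 hv0).symm)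
      (hPind t ht t' ht') htt'
      (hsT v0 (by rw [hT]; simp [hv0])) (hsT t' (by rw [hT]; simp [ht']))
      hadj h1
    exact h2 this
  have crossR : ∀ w ∈ R, G.Adj s w → False := by
    intro w hw hadj
    have := dcross hX hV (u := w) (v := u0) (p := t) (q := t') (z := s)
      (hQR u0 hu0 w hw).symm ((hPR t ht w hw).symm) ((hPR t' ht' w hw).symm)
      ((hPQ t ht u0 hu0).symm) ((hPQ t' ht' u0 hu0).symm)
      (hPind t ht t' ht') htt'
      (hsT u0 (by rw [hT]; simp [hu0])) (hsT t' (by rw [hT]; simp [ht']))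
      hadj h1
    exact h2 this
  intro w hw hadj
  have hw' := (hT w).1 hw
  rcases Finset.mem_union.1 hw' with hw'' | hwR
  · rcases Finset.mem_union.1 hw'' with hwP | hwQ
    · by_contra hne
      -- w ∈ P, w ≠ t; can't be t' since s ~ w
      have hwt' : w ≠ t' := fun h => h2 (h ▸ hadj)
      have hzu : G.Adj s u0 ∨ G.Adj s v0 := by
        by_cases hu : G.Adj s u0
        · exact Or.inl hu
        · refine Or.inr (dpq' hX hV (u := u0) (v := v0) (p := t) (q := w) (z := s)
            (hQR u0 hu0 v0 hv0) ((hPQ t ht u0 hu0).symm) ((hPQ w hwP u0 hu0).symm)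
            ((hPR t ht v0 hv0).symm) ((hPR w hwP v0 hv0).symm)
            (hPind t ht w hwP) (fun h => hne h.symm)
            (hsT u0 (by rw [hT]; simp [hu0])) (hsT v0 (by rw [hT]; simp [hv0]))
            h1 hadj hu)
      rcases hzu with h | h
      · exact crossQ u0 hu0 h
      · exact crossR v0 hv0 h
    · exact (crossQ w hwQ hadj).elim
  · exact (crossR w hwR hadj).elim

/-- maximality contradiction: a vertex seeing both `t1, t2 ∈ P` and some `u0 ∈ Q`. -/
theorem ext_contra {P Q R T : Finset V} (hG : Good G P Q R)
    (hnoR : NoExt G R P Q) (hT : ∀ x, x ∈ T ↔ x ∈ P ∪ Q ∪ R)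
    {t1 t2 s : V} (ht1 : t1 ∈ P) (ht2 : t2 ∈ P) (hne : t1 ≠ t2)
    (hs : s ∉ T) (h1 : G.Adj s t1) (h2 : G.Adj s t2)
    {u0 : V} (hu0 : u0 ∈ Q) (hu : G.Adj s u0) : False := by
  obtain ⟨hPne, hQne, hRne, hPind, hQind, hRind, hPQ, hPR, hQR⟩ := hG
  have hsT : ∀ y ∈ T, s ≠ y := fun y hy h => hs (h ▸ hy)
  have hnR : ∀ v ∈ R, ¬ G.Adj s v := by
    intro v hv hadj
    exact lemK4 hX hV hu hadj h1 (hQR u0 hu0 v hv) ((hPQ t1 ht1 u0 hu0).symm)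
      ((hPR t1 ht1 v hv).symm)
  have hallP : ∀ α ∈ P, G.Adj s α := by
    intro α hα
    by_cases h : α = t1
    · exact h ▸ h1
    · obtain ⟨v0, hv0⟩ := hRne
      exact dcross hX hV (u := u0) (v := v0) (p := t1) (q := α) (z := s)
        (hQR u0 hu0 v0 hv0) ((hPQ t1 ht1 u0 hu0).symm) ((hPQ α hα u0 hu0).symm)
        ((hPR t1 ht1 v0 hv0).symm) ((hPR α hα v0 hv0).symm)
        (hPind t1 ht1 α hα) (fun hh => h hh.symm)
        (hsT v0 (by rw [hT]; simp [hv0])) (hsT α (by rw [hT]; simp [hα]))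
        hu h1
  have hallQ : ∀ w ∈ Q, G.Adj s w := by
    intro w hw
    obtain ⟨v0, hv0⟩ := hRne
    exact dpq' hX hV (u := v0) (v := w) (p := t1) (q := t2) (z := s)
      (hQR w hw v0 hv0).symm ((hPR t1 ht1 v0 hv0).symm) ((hPR t2 ht2 v0 hv0).symm)
      ((hPQ t1 ht1 w hw).symm) ((hPQ t2 ht2 w hw).symm)
      (hPind t1 ht1 t2 ht2) hne
      (hsT v0 (by rw [hT]; simp [hv0])) (hsT w (by rw [hT]; simp [hw]))
      h1 h2 (hnR v0 hv0)
  exact hnoR s (by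
      intro hmem
      apply hs
      rw [hT]
      simp only [Finset.mem_union] at hmem ⊢
      tauto)
    ⟨hnR, hallP, hallQ⟩

/-- an interior vertex adjacent to a vertex of `P` yields a shorter bad walk. -/
theorem shorter_bad {P Q R T : Finset V} (hG : Good G P Q R)
    (hT : ∀ x, x ∈ T ↔ x ∈ P ∪ Q ∪ R)
    {n : ℕ} {t1 : V} {z : ℕ → V} (ht1 : t1 ∈ P)
    (hz0 : z 0 = t1) (hzadj : ∀ i, i < n → G.Adj (z i) (z (i + 1)))
    (hzout : ∀ i, 0 < i → i < n → z i ∉ T)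
    (hind : ∀ i j, i + 1 < j → j ≤ n → ¬ G.Adj (z i) (z j))
    (hmin : ∀ m, m < n → ¬ Bad G T m)
    {j1 : ℕ} (hj1l : 2 ≤ j1) (hj1u : j1 ≤ n - 2) (hn3 : 3 ≤ n)
    {w : V} (hwP : w ∈ P) (hadjw : G.Adj (z j1) w) : False := by
  obtain ⟨hPne, hQne, hRne, hPind, hQind, hRind, hPQ, hPR, hQR⟩ := hG
  have hwt1 : w ≠ t1 := by
    intro h
    have := hind 0 j1 (by omega) (by omega)
    rw [hz0] at this
    exact this (h ▸ hadjw).symm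
  apply hmin (j1 + 1) (by omega)
  refine ⟨t1, (hT t1).2 (by simp [ht1]), w, (hT w).2 (by simp [hwP]), fun h => hwt1 h.symm, ?_,
    fun k => if k ≤ j1 then z k else w, ?_, ?_, ?_, ?_⟩
  · exact fun h => (hPind t1 ht1 w hwP) h
  · simp [hz0]
  · simp
  · intro k hk
    by_cases h : k < j1
    · simp only [if_pos (by omega : k ≤ j1), if_pos (by omega : k + 1 ≤ j1)]
      exact hzadj k (by omega)
    · have hkj : k = j1 := by omega
      subst hkj
      simp only [if_pos le_rfl, if_neg (by omega : ¬ k + 1 ≤ k)]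
      exact hadjw
  · intro k h1 h2
    have hk : (fun k => if k ≤ j1 then z k else w) k = z k := by
      simp only [if_pos (show k ≤ j1 by omega)]
    rw [hk]
    exact hzout k h1 (by omega)

/-- The attached-interior-vertex case. `w ∈ Q` is a neighbour of `z j1`. -/
theorem attached_case {P Q R T : Finset V} (hG : Good G P Q R)
    (hnoP : NoExt G P Q R) (hT : ∀ x, x ∈ T ↔ x ∈ P ∪ Q ∪ R)
    {n : ℕ} {t1 t2 : V} {z : ℕ → V} (hn3 : 3 ≤ n)
    (ht1 : t1 ∈ P) (ht2 : t2 ∈ P) (hne : t1 ≠ t2)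
    (hz0 : z 0 = t1) (hzn : z n = t2) (hzadj : ∀ i, i < n → G.Adj (z i) (z (i + 1)))
    (hzout : ∀ i, 0 < i → i < n → z i ∉ T)
    (hind : ∀ i j, i + 1 < j → j ≤ n → ¬ G.Adj (z i) (z j))
    (hinj : ∀ i j, i ≤ n → j ≤ n → z i = z j → i = j)
    (hmin : ∀ m, m < n → ¬ Bad G T m)
    {j1 : ℕ} (hj1l : 2 ≤ j1) (hj1u : j1 ≤ n - 2)
    {w : V} (hwQ : w ∈ Q) (hadjw : G.Adj (z j1) w)
    (hclean : ∀ i, 2 ≤ i → i < j1 → ∀ y ∈ T, ¬ G.Adj (z i) y)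
    (hZ1 : ∀ y ∈ T, G.Adj (z 1) y → y = t1) : False := by
  obtain ⟨hPne, hQne, hRne, hPind, hQind, hRind, hPQ, hPR, hQR⟩ := hG
  obtain ⟨v0, hv0⟩ := id hRne
  have hzj1T : z j1 ∉ T := hzout j1 (by omega) (by omega)
  have hzj1s : ∀ y ∈ T, z j1 ≠ y := fun y hy h => hzj1T (h ▸ hy)
  have hnt1 : ¬ G.Adj (z j1) t1 := by
    have := hind 0 j1 (by omega) (by omega)
    rw [hz0] at this
    exact fun h => this h.symm
  have hnt2 : ¬ G.Adj (z j1) t2 := by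
    have := hind j1 n (by omega) le_rfl
    rwa [hzn] at this
  -- uniqueness of the neighbour w
  have huniq : ∀ w' ∈ T, G.Adj (z j1) w' → w' = w := by
    intro w' hw' hadj'
    rcases Finset.mem_union.1 ((hT w').1 hw') with hw'' | hw'R
    · rcases Finset.mem_union.1 hw'' with hw'P | hw'Q
      · exact (shorter_bad hX hV ⟨hPne, hQne, hRne, hPind, hQind, hRind, hPQ, hPR, hQR⟩
          hT ht1 hz0 hzadj hzout hind hmin hj1l hj1u hn3 hw'P hadj').elim
      · -- w' ∈ Q : maximality contradiction
        by_contra hne'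
        have hRall : ∀ γ ∈ R, G.Adj (z j1) γ := by
          intro γ hγ
          exact dpq' hX hV (u := t1) (v := γ) (p := w) (q := w') (z := z j1)
            (hPR t1 ht1 γ hγ) (hPQ t1 ht1 w hwQ) (hPQ t1 ht1 w' hw'Q)
            (hQR w hwQ γ hγ).symm (hQR w' hw'Q γ hγ).symm
            (hQind w hwQ w' hw'Q) (fun h => hne' h.symm)
            (hzj1s t1 ((hT t1).2 (by simp [ht1]))) (hzj1s γ ((hT γ).2 (by simp [hγ])))
            hadjw hadj' hnt1
        have hQall : ∀ w'' ∈ Q, G.Adj (z j1) w'' := by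
          intro w'' hw''Q
          by_cases h : w'' = w
          · exact h ▸ hadjw
          · exact dcross hX hV (u := v0) (v := t1) (p := w) (q := w'') (z := z j1)
              (hPR t1 ht1 v0 hv0).symm (hQR w hwQ v0 hv0).symm (hQR w'' hw''Q v0 hv0).symm
              (hPQ t1 ht1 w hwQ) (hPQ t1 ht1 w'' hw''Q)
              (hQind w hwQ w'' hw''Q) (fun hh => h hh.symm)
              (hzj1s t1 ((hT t1).2 (by simp [ht1]))) (hzj1s w'' ((hT w'').2 (by simp [hw''Q])))
              (hRall v0 hv0) hadjw
        have hPnone : ∀ α ∈ P, ¬ G.Adj (z j1) α := by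
          intro α hα hadjα
          exact lemK4 hX hV hadjw (hRall v0 hv0) hadjα (hQR w hwQ v0 hv0)
            (hPQ α hα w hwQ).symm (hPR α hα v0 hv0).symm
        exact hnoP (z j1) (by
            intro hmem
            apply hzj1T
            rw [hT]
            simp only [Finset.mem_union] at hmem ⊢
            tauto)
          ⟨hPnone, hQall, hRall⟩
    · -- w' ∈ R : X-cycle
      apply absurd (genX G j1 (by omega) z w w' ?_ ?_ ?_ ?_ ?_ ?_ ?_ ?_ ?_ ?_ ?_ ?_ ?_) hX
      · exact fun i hi => hzadj i (by omega)
      · exact fun i j h1 h2 => hind i j h1 (by omega)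
      · exact fun i j h1 h2 h => hinj i j (by omega) (by omega) h
      · intro i hi
        rcases Nat.eq_zero_or_pos i with rfl | hip
        · rw [hz0]; exact (hPQ t1 ht1 w hwQ).ne'
        · exact fun h => (hzout i hip (by omega)) (h ▸ (hT w).2 (by simp [hwQ]))
      · intro i hi
        rcases Nat.eq_zero_or_pos i with rfl | hip
        · rw [hz0]; exact (hPR t1 ht1 w' hw'R).ne'
        · exact fun h => (hzout i hip (by omega)) (h ▸ (hT w').2 (by simp [hw'R]))
      · exact (hQR w hwQ w' hw'R).ne
      · exact hadjw
      · exact hQR w hwQ w' hw'R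
      · rw [hz0]; exact (hPR t1 ht1 w' hw'R).symm
      · rw [hz0]; exact hPQ t1 ht1 w hwQ
      · exact hadj'
      · intro i h1 h2 hadji
        rcases eq_or_lt_of_le (show 1 ≤ i by omega) with h | h
        · have := hZ1 w ((hT w).2 (by simp [hwQ])) (h ▸ hadji.symm)
          exact (hPQ t1 ht1 w hwQ).ne' this
        · exact hclean i (by omega) h2 w ((hT w).2 (by simp [hwQ])) hadji.symm
      · intro i h1 h2 hadji
        rcases eq_or_lt_of_le (show 1 ≤ i by omega) with h | h
        · have := hZ1 w' ((hT w').2 (by simp [hw'R])) (h ▸ hadji.symm)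
          exact (hPR t1 ht1 w' hw'R).ne' this
        · exact hclean i (by omega) h2 w' ((hT w').2 (by simp [hw'R])) hadji.symm
  -- the final V-cycle
  apply absurd (genV G j1 (by omega) z w t2 v0 ?_ ?_ ?_ ?_ ?_ ?_ ?_ ?_ ?_ ?_ ?_ ?_ ?_ ?_ ?_ ?_ ?_ ?_) hV
  · exact fun i hi => hzadj i (by omega)
  · exact fun i j h1 h2 => hind i j h1 (by omega)
  · exact fun i j h1 h2 h => hinj i j (by omega) (by omega) h
  · intro i hi
    rcases Nat.eq_zero_or_pos i with rfl | hip
    · rw [hz0]; exact (hPQ t1 ht1 w hwQ).ne'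
    · exact fun h => (hzout i hip (by omega)) (h ▸ (hT w).2 (by simp [hwQ]))
  · intro i hi
    rcases Nat.eq_zero_or_pos i with rfl | hip
    · rw [hz0]; exact fun h => hne h.symm
    · exact fun h => (hzout i hip (by omega)) (h ▸ (hT t2).2 (by simp [ht2]))
  · intro i hi
    rcases Nat.eq_zero_or_pos i with rfl | hip
    · rw [hz0]; exact (hPR t1 ht1 v0 hv0).ne'
    · exact fun h => (hzout i hip (by omega)) (h ▸ (hT v0).2 (by simp [hv0]))
  · exact (hPQ t2 ht2 w hwQ).ne'
  · exact (hQR w hwQ v0 hv0).ne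
  · exact (hPR t2 ht2 v0 hv0).ne
  · exact hadjw
  · exact (hPQ t2 ht2 w hwQ).symm
  · exact hPR t2 ht2 v0 hv0
  · rw [hz0]; exact (hPR t1 ht1 v0 hv0).symm
  · rw [hz0]; exact hPQ t1 ht1 w hwQ
  · exact hQR w hwQ v0 hv0
  · intro i h1 h2 hadji
    rcases eq_or_lt_of_le (show 1 ≤ i by omega) with h | h
    · have := hZ1 w ((hT w).2 (by simp [hwQ])) (h ▸ hadji.symm)
      exact (hPQ t1 ht1 w hwQ).ne' this
    · exact hclean i (by omega) h2 w ((hT w).2 (by simp [hwQ])) hadji.symm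
  · intro i hi hadji
    rcases Nat.eq_zero_or_pos i with rfl | hip
    · rw [hz0] at hadji; exact (hPind t1 ht1 t2 ht2) hadji.symm
    · rcases eq_or_lt_of_le (show 1 ≤ i by omega) with h | h
      · exact hne ((hZ1 t2 ((hT t2).2 (by simp [ht2])) (h ▸ hadji.symm)).symm)
      · rcases eq_or_lt_of_le (show i ≤ j1 from hi) with h' | h'
        · exact (hPQ t2 ht2 w hwQ).ne
            (huniq t2 ((hT t2).2 (by simp [ht2])) (h' ▸ hadji.symm))
        · exact hclean i (by omega) h' t2 ((hT t2).2 (by simp [ht2])) hadji.symm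
  · intro i h1 h2 hadji
    rcases eq_or_lt_of_le (show 1 ≤ i from h1) with h | h
    · have := hZ1 v0 ((hT v0).2 (by simp [hv0])) (h ▸ hadji.symm)
      exact (hPR t1 ht1 v0 hv0).ne' this
    · rcases eq_or_lt_of_le (show i ≤ j1 from h2) with h' | h'
      · exact (hQR w hwQ v0 hv0).ne
          ((huniq v0 ((hT v0).2 (by simp [hv0])) (h' ▸ hadji.symm)).symm)
      · exact hclean i (by omega) h' v0 ((hT v0).2 (by simp [hv0])) hadji.symm

end Main


section Main2
variable {G : SimpleGraph V} [DecidableEq V] (hX : ¬ HasXCycle G) (hV : ¬ HasVCycle G)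
set_option linter.unusedSectionVars false

theorem good_swap23 {A B C : Finset V} (h : Good G A B C) : Good G A C B :=
  good_swap12 G (good_rot G (good_rot G h))

include hX hV

theorem maincase {P Q R T : Finset V} (hG : Good G P Q R)
    (hnoP : NoExt G P Q R) (hnoQ : NoExt G Q P R) (hnoR : NoExt G R P Q)
    (hT : ∀ x, x ∈ T ↔ x ∈ P ∪ Q ∪ R)
    {n : ℕ} {t1 t2 : V} {z : ℕ → V} (hn2 : 2 ≤ n)
    (ht1 : t1 ∈ P) (ht2 : t2 ∈ P) (hne : t1 ≠ t2) (hnadj : ¬ G.Adj t1 t2)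
    (hz0 : z 0 = t1) (hzn : z n = t2) (hzadj : ∀ i, i < n → G.Adj (z i) (z (i + 1)))
    (hzout : ∀ i, 0 < i → i < n → z i ∉ T)
    (hind : ∀ i j, i + 1 < j → j ≤ n → ¬ G.Adj (z i) (z j))
    (hinj : ∀ i j, i ≤ n → j ≤ n → z i = z j → i = j)
    (hmin : ∀ m, m < n → ¬ Bad G T m) : False := by
  classical
  obtain ⟨hPne, hQne, hRne, hPind, hQind, hRind, hPQ, hPR, hQR⟩ := id hG
  obtain ⟨u0, hu0⟩ := id hQne
  obtain ⟨v0, hv0⟩ := id hRne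
  have hT' : ∀ x, x ∈ T ↔ x ∈ P ∪ R ∪ Q := by
    intro x
    rw [hT]
    simp only [Finset.mem_union]
    tauto
  have h1 : G.Adj (z 1) t1 := by
    have := hzadj 0 (by omega)
    rw [hz0] at this
    exact this.symm
  rcases eq_or_lt_of_le hn2 with hn2' | hn3
  · -- n = 2
    have hz1T : z 1 ∉ T := hzout 1 (by omega) (by omega)
    have h2 : G.Adj (z 1) t2 := by
      have := hzadj 1 (by omega)
      rwa [show (1 + 1 : ℕ) = n by omega, hzn] at this
    have hzs : ∀ y ∈ T, z 1 ≠ y := fun y hy h => hz1T (h ▸ hy)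
    by_cases hu : G.Adj (z 1) u0
    · exact ext_contra hX hV hG hnoR hT ht1 ht2 hne hz1T h1 h2 hu0 hu
    · have hv : G.Adj (z 1) v0 :=
        dpq' hX hV (u := u0) (v := v0) (p := t1) (q := t2) (z := z 1)
          (hQR u0 hu0 v0 hv0) ((hPQ t1 ht1 u0 hu0).symm) ((hPQ t2 ht2 u0 hu0).symm)
          ((hPR t1 ht1 v0 hv0).symm) ((hPR t2 ht2 v0 hv0).symm) hnadj hne
          (hzs u0 ((hT u0).2 (by simp [hu0]))) (hzs v0 ((hT v0).2 (by simp [hv0])))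
          h1 h2 hu
      exact ext_contra hX hV (good_swap23 hG) hnoQ hT' ht1 ht2 hne hz1T h1 h2 hv0 hv
  · -- n ≥ 3
    have hn3' : 3 ≤ n := by omega
    have hZ1 : ∀ y ∈ T, G.Adj (z 1) y → y = t1 := by
      refine endpointNbhd hX hV hG hT ht1 ht2 hne (hzout 1 (by omega) (by omega)) h1 ?_
      have := hind 1 n (by omega) le_rfl
      rwa [hzn] at this
    have hZn : ∀ y ∈ T, G.Adj (z (n - 1)) y → y = t2 := by
      refine endpointNbhd hX hV hG hT ht2 ht1 hne.symm
        (hzout (n - 1) (by omega) (by omega)) ?_ ?_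
      · have := hzadj (n - 1) (by omega)
        rwa [show n - 1 + 1 = n by omega, hzn] at this
      · have := hind 0 (n - 1) (by omega) (by omega)
        rw [hz0] at this
        exact fun h => this h.symm
    by_cases hatt : ∃ j, (2 ≤ j ∧ j ≤ n - 2) ∧ ∃ w ∈ T, G.Adj (z j) w
    · obtain ⟨⟨hj1l, hj1u⟩, w, hwT, hadjw⟩ := Nat.find_spec hatt
      set j1 := Nat.find hatt with hj1def
      have hclean : ∀ i, 2 ≤ i → i < j1 → ∀ y ∈ T, ¬ G.Adj (z i) y := by
        intro i h2i hij1 y hy hadj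
        exact Nat.find_min hatt hij1 ⟨⟨h2i, by omega⟩, y, hy, hadj⟩
      rcases Finset.mem_union.1 ((hT w).1 hwT) with hw' | hwR
      · rcases Finset.mem_union.1 hw' with hwP | hwQ
        · exact shorter_bad hX hV hG hT ht1 hz0 hzadj hzout hind hmin hj1l hj1u hn3' hwP hadjw
        · exact attached_case hX hV hG hnoP hT hn3' ht1 ht2 hne hz0 hzn hzadj hzout hind hinj
            hmin hj1l hj1u hwQ hadjw hclean hZ1
      · exact attached_case hX hV (good_swap23 hG) (noExt_swap G hnoP) hT' hn3' ht1 ht2 hne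
          hz0 hzn hzadj hzout hind hinj
          (by
            intro m hm hb
            exact hmin m hm hb)
          hj1l hj1u hwR hadjw hclean hZ1
    · -- no interior attachment : X-cycle
      apply absurd (genX G n (by omega) z u0 v0 ?_ ?_ ?_ ?_ ?_ ?_ ?_ ?_ ?_ ?_ ?_ ?_ ?_) hX
      · exact hzadj
      · exact hind
      · exact hinj
      · intro i hi
        rcases Nat.eq_zero_or_pos i with rfl | hip
        · rw [hz0]; exact (hPQ t1 ht1 u0 hu0).ne'
        · rcases eq_or_lt_of_le (show i ≤ n from hi) with h | h
          · rw [h, hzn]; exact (hPQ t2 ht2 u0 hu0).ne'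
          · exact fun hh => (hzout i hip h) (hh ▸ (hT u0).2 (by simp [hu0]))
      · intro i hi
        rcases Nat.eq_zero_or_pos i with rfl | hip
        · rw [hz0]; exact (hPR t1 ht1 v0 hv0).ne'
        · rcases eq_or_lt_of_le (show i ≤ n from hi) with h | h
          · rw [h, hzn]; exact (hPR t2 ht2 v0 hv0).ne'
          · exact fun hh => (hzout i hip h) (hh ▸ (hT v0).2 (by simp [hv0]))
      · exact (hQR u0 hu0 v0 hv0).ne
      · rw [hzn]; exact hPQ t2 ht2 u0 hu0
      · exact hQR u0 hu0 v0 hv0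
      · rw [hz0]; exact (hPR t1 ht1 v0 hv0).symm
      · rw [hz0]; exact hPQ t1 ht1 u0 hu0
      · rw [hzn]; exact hPR t2 ht2 v0 hv0
      · intro i hi1 hi2 hadji
        rcases eq_or_lt_of_le (show 1 ≤ i from hi1) with h | h
        · exact (hPQ t1 ht1 u0 hu0).ne'
            (hZ1 u0 ((hT u0).2 (by simp [hu0])) (h ▸ hadji.symm))
        · rcases eq_or_lt_of_le (show i ≤ n - 1 by omega) with h' | h'
          · exact (hPQ t2 ht2 u0 hu0).ne'
              (hZn u0 ((hT u0).2 (by simp [hu0])) (h' ▸ hadji.symm))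
          · exact hatt ⟨i, ⟨by omega, by omega⟩, u0, (hT u0).2 (by simp [hu0]), hadji.symm⟩
      · intro i hi1 hi2 hadji
        rcases eq_or_lt_of_le (show 1 ≤ i from hi1) with h | h
        · exact (hPR t1 ht1 v0 hv0).ne'
            (hZ1 v0 ((hT v0).2 (by simp [hv0])) (h ▸ hadji.symm))
        · rcases eq_or_lt_of_le (show i ≤ n - 1 by omega) with h' | h'
          · exact (hPR t2 ht2 v0 hv0).ne'
              (hZn v0 ((hT v0).2 (by simp [hv0])) (h' ▸ hadji.symm))
          · exact hatt ⟨i, ⟨by omega, by omega⟩, v0, (hT v0).2 (by simp [hv0]), hadji.symm⟩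

theorem noBad {A B C : Finset V} (hG : Good G A B C)
    (hnoA : NoExt G A B C) (hnoB : NoExt G B A C) (hnoC : NoExt G C A B) :
    ¬ ∃ n, Bad G (A ∪ B ∪ C) n := by
  intro hex
  obtain ⟨n, t1, t2, z, hn2, ht1T, ht2T, hne, hnadj, hz0, hzn, hzadj, hzout, hind, hinj, hmin⟩ :=
    extract G hex
  obtain ⟨hPne, hQne, hRne, hPind, hQind, hRind, hPQ, hPR, hQR⟩ := id hG
  have hTBAC : ∀ x, x ∈ A ∪ B ∪ C ↔ x ∈ B ∪ A ∪ C := by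
    intro x; simp only [Finset.mem_union]; tauto
  have hTCAB : ∀ x, x ∈ A ∪ B ∪ C ↔ x ∈ C ∪ A ∪ B := by
    intro x; simp only [Finset.mem_union]; tauto
  rcases Finset.mem_union.1 ht1T with h1' | h1C
  · rcases Finset.mem_union.1 h1' with h1A | h1B
    · -- t1 ∈ A ⇒ t2 ∈ A
      have h2A : t2 ∈ A := by
        rcases Finset.mem_union.1 ht2T with h2' | h2C
        · rcases Finset.mem_union.1 h2' with h2A | h2B
          · exact h2A
          · exact absurd (hPQ t1 h1A t2 h2B) hnadj
        · exact absurd (hPR t1 h1A t2 h2C) hnadj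
      exact maincase hX hV hG hnoA hnoB hnoC (fun x => Iff.rfl) hn2 h1A h2A hne hnadj
        hz0 hzn hzadj hzout hind hinj hmin
    · have h2B : t2 ∈ B := by
        rcases Finset.mem_union.1 ht2T with h2' | h2C
        · rcases Finset.mem_union.1 h2' with h2A | h2B
          · exact absurd (hPQ t2 h2A t1 h1B) (fun h => hnadj h.symm)
          · exact h2B
        · exact absurd (hQR t1 h1B t2 h2C) hnadj
      exact maincase hX hV (good_swap12 G hG) hnoB hnoA (noExt_swap G hnoC) hTBAC hn2
        h1B h2B hne hnadj hz0 hzn hzadj hzout hind hinj hmin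
  · have h2C : t2 ∈ C := by
      rcases Finset.mem_union.1 ht2T with h2' | h2C
      · rcases Finset.mem_union.1 h2' with h2A | h2B
        · exact absurd (hPR t2 h2A t1 h1C) (fun h => hnadj h.symm)
        · exact absurd (hQR t2 h2B t1 h1C) (fun h => hnadj h.symm)
      · exact h2C
    exact maincase hX hV (good_rot G (good_rot G hG)) hnoC (noExt_swap G hnoA)
      (noExt_swap G hnoB) hTCAB hn2 h1C h2C hne hnadj hz0 hzn hzadj hzout hind hinj hmin

end Main2


section Final
variable {G : SimpleGraph V} [DecidableEq V] (hX : ¬ HasXCycle G) (hV : ¬ HasVCycle G)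
set_option linter.unusedSectionVars false

theorem final_tripartite {A B C : Finset V} (hG : Good G A B C)
    (hall : ∀ x, x ∈ A ∪ B ∪ C) : IsCompleteTripartite G := by
  obtain ⟨hPne, hQne, hRne, hPind, hQind, hRind, hPQ, hPR, hQR⟩ := hG
  have hAB : ∀ v, v ∈ A → v ∈ B → False := fun v h1 h2 => G.loopless.irrefl v (hPQ v h1 v h2)
  have hAC : ∀ v, v ∈ A → v ∈ C → False := fun v h1 h2 => G.loopless.irrefl v (hPR v h1 v h2)
  have hBC : ∀ v, v ∈ B → v ∈ C → False := fun v h1 h2 => G.loopless.irrefl v (hQR v h1 v h2)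
  classical
  have pA : ∀ v, v ∈ A → (if v ∈ A then (0 : Fin 3) else if v ∈ B then 1 else 2) = 0 :=
    fun v h => by simp [h]
  have pB : ∀ v, v ∈ B → (if v ∈ A then (0 : Fin 3) else if v ∈ B then 1 else 2) = 1 := by
    intro v h
    have h1 : v ∉ A := fun hh => hAB v hh h
    simp [h1, h]
  have pC : ∀ v, v ∈ C → (if v ∈ A then (0 : Fin 3) else if v ∈ B then 1 else 2) = 2 := by
    intro v h
    have h1 : v ∉ A := fun hh => hAC v hh h
    have h2 : v ∉ B := fun hh => hBC v hh h
    simp [h1, h2]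
  refine ⟨fun v => if v ∈ A then 0 else if v ∈ B then 1 else 2, ?_, ?_⟩
  · intro i
    obtain ⟨a0, ha0⟩ := hPne
    obtain ⟨b0, hb0⟩ := hQne
    obtain ⟨c0, hc0⟩ := hRne
    fin_cases i
    · exact ⟨a0, pA a0 ha0⟩
    · exact ⟨b0, pB b0 hb0⟩
    · exact ⟨c0, pC c0 hc0⟩
  · intro x y
    show G.Adj x y ↔ (if x ∈ A then (0 : Fin 3) else if x ∈ B then 1 else 2) ≠
      (if y ∈ A then (0 : Fin 3) else if y ∈ B then 1 else 2)
    have hx := hall x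
    have hy := hall y
    simp only [Finset.mem_union] at hx hy
    rcases hx with (hx | hx) | hx <;> rcases hy with (hy | hy) | hy
    · rw [pA x hx, pA y hy]
      exact ⟨fun h => absurd h (hPind x hx y hy), fun h => absurd rfl h⟩
    · rw [pA x hx, pB y hy]
      exact ⟨fun _ => by decide, fun _ => hPQ x hx y hy⟩
    · rw [pA x hx, pC y hy]
      exact ⟨fun _ => by decide, fun _ => hPR x hx y hy⟩
    · rw [pB x hx, pA y hy]
      exact ⟨fun _ => by decide, fun _ => (hPQ y hy x hx).symm⟩
    · rw [pB x hx, pB y hy]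
      exact ⟨fun h => absurd h (hQind x hx y hy), fun h => absurd rfl h⟩
    · rw [pB x hx, pC y hy]
      exact ⟨fun _ => by decide, fun _ => hQR x hx y hy⟩
    · rw [pC x hx, pA y hy]
      exact ⟨fun _ => by decide, fun _ => (hPR y hy x hx).symm⟩
    · rw [pC x hx, pB y hy]
      exact ⟨fun _ => by decide, fun _ => (hQR y hy x hx).symm⟩
    · rw [pC x hx, pC y hy]
      exact ⟨fun h => absurd h (hRind x hx y hy), fun h => absurd rfl h⟩

theorem noext_gen {A B C : Finset V} (hG : Good G A B C)
    (hmax : ∀ A' B' C' : Finset V, Good G A' B' C' →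
      (A' ∪ B' ∪ C').card ≤ (A ∪ B ∪ C).card) :
    NoExt G A B C := by
  intro z hz hk
  obtain ⟨k1, k2, k3⟩ := hk
  obtain ⟨hPne, hQne, hRne, hPind, hQind, hRind, hPQ, hPR, hQR⟩ := hG
  have hGood' : Good G (insert z A) B C := by
    refine ⟨Finset.insert_nonempty _ _, hQne, hRne, ?_, hQind, hRind, ?_, ?_, hQR⟩
    · intro x hx y hy
      rcases Finset.mem_insert.1 hx with h1 | h1 <;> rcases Finset.mem_insert.1 hy with h2 | h2
      · rw [h1, h2]; exact G.loopless.irrefl _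
      · rw [h1]; exact k1 y h2
      · rw [h2]; exact fun h => k1 x h1 h.symm
      · exact hPind x h1 y h2
    · intro x hx y hy
      rcases Finset.mem_insert.1 hx with h1 | h1
      · rw [h1]; exact k2 y hy
      · exact hPQ x h1 y hy
    · intro x hx y hy
      rcases Finset.mem_insert.1 hx with h1 | h1
      · rw [h1]; exact k3 y hy
      · exact hPR x h1 y hy
  have hc := hmax _ _ _ hGood'
  rw [Finset.insert_union, Finset.insert_union, Finset.card_insert_of_notMem hz] at hc
  omega

include hX hV

theorem final_cutset {A B C : Finset V} (hG : Good G A B C)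
    (hnoA : NoExt G A B C) (hnoB : NoExt G B A C) (hnoC : NoExt G C A B)
    (hcard4 : 4 ≤ (A ∪ B ∪ C).card) {x0 : V} (hx0 : x0 ∉ A ∪ B ∪ C) :
    HasCliqueCutset G := by
  classical
  set T := A ∪ B ∪ C with hTdef
  set U : Set V := {v | v ∉ T} with hUdef
  have hx0U : x0 ∈ U := hx0
  set G' : SimpleGraph U := G.induce U with hG'def
  set S : Set V := {t | t ∈ T ∧ ∃ y : U, G'.Reachable ⟨x0, hx0U⟩ y ∧ G.Adj (y : V) t}
    with hSdef
  have hnb := noBad hX hV hG hnoA hnoB hnoC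
  -- S is a clique
  have hSclique : G.IsClique S := by
    intro t1 ht1 t2 ht2 hne
    by_contra hnadj
    obtain ⟨ht1T, y1, hr1, hadj1⟩ := ht1
    obtain ⟨ht2T, y2, hr2, hadj2⟩ := ht2
    obtain ⟨W⟩ := hr1.symm.trans hr2
    apply hnb
    refine ⟨W.length + 2, t1, ht1T, t2, ht2T, hne, hnadj,
      fun k => if k = 0 then t1 else if k ≤ W.length + 1 then (W.getVert (k - 1) : V) else t2,
      by simp, ?_, ?_, ?_⟩
    · simp only [if_neg (by omega : ¬ W.length + 2 = 0),
        if_neg (by omega : ¬ W.length + 2 ≤ W.length + 1)]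
    · intro i hi
      rcases Nat.eq_zero_or_pos i with rfl | hip
      · simp only [if_pos rfl, if_neg (by omega : ¬ (0 + 1 : ℕ) = 0),
          if_pos (by omega : (0 + 1 : ℕ) ≤ W.length + 1)]
        have : W.getVert (0 + 1 - 1) = y1 := W.getVert_zero
        rw [this]
        exact hadj1.symm
      · by_cases hlast : i = W.length + 1
        · subst hlast
          simp only [if_neg (by omega : ¬ W.length + 1 = 0),
            if_pos (le_refl (W.length + 1)),
            if_neg (by omega : ¬ W.length + 1 + 1 = 0),
            if_neg (by omega : ¬ W.length + 1 + 1 ≤ W.length + 1)]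
          have : W.getVert (W.length + 1 - 1) = y2 := by
            simp only [Nat.add_sub_cancel]
            exact W.getVert_length
          rw [this]
          exact hadj2
        · have hi' : i ≤ W.length := by omega
          simp only [if_neg (by omega : ¬ i = 0), if_pos (by omega : i ≤ W.length + 1),
            if_neg (by omega : ¬ i + 1 = 0), if_pos (by omega : i + 1 ≤ W.length + 1)]
          have hadj := W.adj_getVert_succ (i := i - 1) (by omega)
          have : i - 1 + 1 = i := by omega
          rw [this] at hadj
          have : i + 1 - 1 = i := by omega
          rw [this]
          exact hadj
    · intro i hi1 hi2
      simp only [if_neg (by omega : ¬ i = 0), if_pos (by omega : i ≤ W.length + 1)]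
      exact (W.getVert (i - 1)).2
  -- there is a vertex of T outside S
  have hST : S ⊆ ↑T := fun t ht => ht.1
  obtain ⟨tstar, htT, htS⟩ : ∃ t, t ∈ T ∧ t ∉ S := by
    by_contra h
    push_neg at h
    -- then T ⊆ S, but T contains two nonadjacent vertices
    obtain ⟨hPne, hQne, hRne, hPind, hQind, hRind, hPQ, hPR, hQR⟩ := hG
    have hpart : 2 ≤ A.card ∨ 2 ≤ B.card ∨ 2 ≤ C.card := by
      by_contra hc
      push_neg at hc
      have h1 := Finset.card_union_le (A ∪ B) C
      have h2 := Finset.card_union_le A B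
      have h3 : T.card = (A ∪ B ∪ C).card := by rw [hTdef]
      omega
    obtain ⟨p1, hp1, p2, hp2, hpne, hpnadj⟩ :
        ∃ p1, p1 ∈ T ∧ ∃ p2, p2 ∈ T ∧ p1 ≠ p2 ∧ ¬ G.Adj p1 p2 := by
      rcases hpart with h2 | h2 | h2
      · obtain ⟨p1, hp1, p2, hp2, hne⟩ := Finset.one_lt_card.1 h2
        exact ⟨p1, by simp [hTdef, hp1], p2, by simp [hTdef, hp2], hne, hPind p1 hp1 p2 hp2⟩
      · obtain ⟨p1, hp1, p2, hp2, hne⟩ := Finset.one_lt_card.1 h2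
        exact ⟨p1, by simp [hTdef, hp1], p2, by simp [hTdef, hp2], hne, hQind p1 hp1 p2 hp2⟩
      · obtain ⟨p1, hp1, p2, hp2, hne⟩ := Finset.one_lt_card.1 h2
        exact ⟨p1, by simp [hTdef, hp1], p2, by simp [hTdef, hp2], hne, hRind p1 hp1 p2 hp2⟩
    exact hpnadj (hSclique (h p1 hp1) (h p2 hp2) hpne)
  refine ⟨S, hSclique, ?_⟩
  intro hpre
  have hx0S : x0 ∈ (Sᶜ : Set V) := fun h => hx0 (hST h)
  have htstarS : tstar ∈ (Sᶜ : Set V) := htS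
  -- all vertices reachable from x0 in G - S avoid T
  have key : ∀ (b : (Sᶜ : Set V)) (a : (Sᶜ : Set V)) (w : (G.induce (Sᶜ : Set V)).Walk a b),
      ∀ (ha : (a : V) ∈ U), G'.Reachable ⟨x0, hx0U⟩ ⟨a, ha⟩ →
      ∃ (hb : (b : V) ∈ U), G'.Reachable ⟨x0, hx0U⟩ ⟨b, hb⟩ := by
    intro b a w
    induction w with
    | nil => intro ha hr; exact ⟨ha, hr⟩
    | @cons a c b hadj p ih =>
      intro ha hr
      have hcU : (c : V) ∈ U := by
        intro hcT
        exact c.2 ⟨hcT, ⟨a, ha⟩, hr, hadj⟩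
      have hrc : G'.Reachable ⟨x0, hx0U⟩ ⟨c, hcU⟩ :=
        hr.trans (SimpleGraph.Adj.reachable (by exact hadj))
      exact ih hcU hrc
  obtain ⟨W⟩ := hpre ⟨x0, hx0S⟩ ⟨tstar, htstarS⟩
  obtain ⟨hb, _⟩ := key ⟨tstar, htstarS⟩ ⟨x0, hx0S⟩ W hx0U (by rfl)
  exact hb htT

end Final

end TC

/-- An (X-cycle, V-cycle)-free graph has a clique cutset, or is a complete tripartite
graph, or is diamond-free. -/
theorem cliqueCutset_or_tripartite_or_diamondFree {V : Type*} [Fintype V]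
    (G : SimpleGraph V) (hX : ¬ HasXCycle G) (hV : ¬ HasVCycle G) :
    HasCliqueCutset G ∨ IsCompleteTripartite G ∨ DiamondFree G := by
  classical
  by_cases hD : DiamondFree G
  · exact Or.inr (Or.inr hD)
  rw [DiamondFree, not_not] at hD
  obtain ⟨a, b, c, d, hcd, hab, hac, had, hbc, hbd, hncd⟩ := hD
  have hGood0 : TC.Good G {a} {b} {c, d} := by
    refine ⟨⟨a, by simp⟩, ⟨b, by simp⟩, ⟨c, by simp⟩, ?_, ?_, ?_, ?_, ?_, ?_⟩
    · intro x hx y hy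
      simp only [Finset.mem_singleton] at hx hy
      rw [hx, hy]; exact G.loopless.irrefl a
    · intro x hx y hy
      simp only [Finset.mem_singleton] at hx hy
      rw [hx, hy]; exact G.loopless.irrefl b
    · intro x hx y hy
      simp only [Finset.mem_insert, Finset.mem_singleton] at hx hy
      rcases hx with h1 | h1 <;> rcases hy with h2 | h2 <;> rw [h1, h2]
      · exact G.loopless.irrefl _
      · exact hncd
      · exact fun h => hncd h.symm
      · exact G.loopless.irrefl _
    · intro x hx y hy
      simp only [Finset.mem_singleton] at hx hy
      rw [hx, hy]; exact hab
    · intro x hx y hy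
      simp only [Finset.mem_singleton] at hx
      simp only [Finset.mem_insert, Finset.mem_singleton] at hy
      rcases hy with h2 | h2 <;> rw [hx, h2]
      · exact hac
      · exact had
    · intro x hx y hy
      simp only [Finset.mem_singleton] at hx
      simp only [Finset.mem_insert, Finset.mem_singleton] at hy
      rcases hy with h2 | h2 <;> rw [hx, h2]
      · exact hbc
      · exact hbd
  have hfilne : (Finset.univ.filter fun t : Finset V × Finset V × Finset V =>
      TC.Good G t.1 t.2.1 t.2.2).Nonempty :=
    ⟨({a}, {b}, {c, d}), Finset.mem_filter.2 ⟨Finset.mem_univ _, hGood0⟩⟩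
  obtain ⟨⟨A, B, C⟩, hmem, hmaxf⟩ := Finset.exists_max_image _
    (fun t : Finset V × Finset V × Finset V => (t.1 ∪ t.2.1 ∪ t.2.2).card) hfilne
  have hGood : TC.Good G A B C := (Finset.mem_filter.1 hmem).2
  have hmax : ∀ A' B' C' : Finset V, TC.Good G A' B' C' →
      (A' ∪ B' ∪ C').card ≤ (A ∪ B ∪ C).card := by
    intro A' B' C' hg
    exact hmaxf (A', B', C') (Finset.mem_filter.2 ⟨Finset.mem_univ _, hg⟩)
  have hnoA : TC.NoExt G A B C := TC.noext_gen hGood hmax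
  have hUB : B ∪ A ∪ C = A ∪ B ∪ C := by
    ext x; simp only [Finset.mem_union]; tauto
  have hUC : C ∪ A ∪ B = A ∪ B ∪ C := by
    ext x; simp only [Finset.mem_union]; tauto
  have hnoB : TC.NoExt G B A C := TC.noext_gen (TC.good_swap12 G hGood)
    (by intro A' B' C' hg; rw [hUB]; exact hmax _ _ _ hg)
  have hnoC : TC.NoExt G C A B := TC.noext_gen (TC.good_rot G (TC.good_rot G hGood))
    (by intro A' B' C' hg; rw [hUC]; exact hmax _ _ _ hg)
  by_cases hall : ∀ x, x ∈ A ∪ B ∪ C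
  · exact Or.inr (Or.inl (TC.final_tripartite hGood hall))
  · push_neg at hall
    obtain ⟨x0, hx0⟩ := hall
    have habcd : ({a} ∪ {b} ∪ ({c, d} : Finset V)) = {a, b, c, d} := by
      ext x
      simp only [Finset.mem_union, Finset.mem_insert, Finset.mem_singleton]
      tauto
    have h4 : ({a, b, c, d} : Finset V).card = 4 := by
      rw [Finset.card_insert_of_notMem (by simp [hab.ne, hac.ne, had.ne]),
        Finset.card_insert_of_notMem (by simp [hbc.ne, hbd.ne]),
        Finset.card_insert_of_notMem (by simp [hcd]),
        Finset.card_singleton]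
    have hcard4 : 4 ≤ (A ∪ B ∪ C).card := by
      have h5 := hmax {a} {b} {c, d} hGood0
      rwa [habcd, h4] at h5
    exact Or.inl (TC.final_cutset hX hV hGood hnoA hnoB hnoC hcard4 hx0)
end

section
/- Let G be a connected graph and let z be a vertex of G. Then there exists an integer k ≥ 0 such that the subgraph of G induced by the set of vertices at distance exactly k from z has chromatic number at least ⌈χ(G)/2⌉. -/
open SimpleGraph

/-- In a connected graph `G`, some level set `S_k(z)` (vertices at distance exactly `k`
from `z`) induces a subgraph of chromatic number at least `⌈χ(G)/2⌉`. -/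
theorem exists_level_chromatic_ge_half {V : Type*} [Fintype V] (G : SimpleGraph V)
    (hG : G.Connected) (z : V) :
    ∃ k : ℕ, (G.chromaticNumber.toNat + 1) / 2 ≤
      (G.induce {v | G.dist z v = k}).chromaticNumber.toNat := by
  classical
  have hne : Nonempty V := hG.nonempty
  set fn : ℕ → ℕ := fun k => (G.induce {v | G.dist z v = k}).chromaticNumber.toNat with hfn
  set m : ℕ := (Finset.univ.image (G.dist z)).sup fn with hmdef
  -- each level is colorable with fn k colors
  have hcol : ∀ k, (G.induce {v | G.dist z v = k}).Colorable (fn k) := fun k =>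
    (G.induce {v | G.dist z v = k}).colorable_chromaticNumber_of_fintype
  have hle : ∀ k, fn k ≤ m := by
    intro k
    by_cases h : ∃ v, G.dist z v = k
    · exact Finset.le_sup (by simpa using h)
    · have : IsEmpty {v | G.dist z v = k} := by
        constructor; rintro ⟨v, hv⟩; exact h ⟨v, hv⟩
      have h0 : (G.induce {v | G.dist z v = k}).chromaticNumber = 0 :=
        SimpleGraph.chromaticNumber_eq_zero_of_isEmpty (G := G.induce {v | G.dist z v = k})
      simp [hfn, h0]
  have hm1 : 1 ≤ m := by
    refine le_trans ?_ (hle 0)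
    by_contra hzero
    have hf0 : fn 0 = 0 := by omega
    have hcol0 := hcol 0
    rw [hf0] at hcol0
    have hemp := (G.induce {v | G.dist z v = 0}).isEmpty_of_colorable_zero hcol0
    exact hemp.elim ⟨z, by simp⟩
  -- choose colorings
  have c : ∀ k, (G.induce {v | G.dist z v = k}).Coloring (Fin (fn k)) := fun k =>
    (hcol k).some
  -- build a global coloring with Fin m × Bool
  let g : ℕ → V → Fin m := fun k v =>
    if hv : G.dist z v = k then Fin.castLE (hle k) (c k ⟨v, hv⟩) else ⟨0, hm1⟩
  have hdadj : ∀ {u v : V}, G.Adj u v →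
      G.dist z v ≤ G.dist z u + 1 := by
    intro u v huv
    have h1 : G.dist u v = 1 := SimpleGraph.dist_eq_one_iff_adj.mpr huv
    calc G.dist z v ≤ G.dist z u + G.dist u v := hG.dist_triangle
      _ = G.dist z u + 1 := by rw [h1]
  let C : G.Coloring (Fin m × Bool) := SimpleGraph.Coloring.mk
    (fun v => (g (G.dist z v) v, decide (G.dist z v % 2 = 1)))
    (by
      intro u v huv
      by_cases h : G.dist z u = G.dist z v
      · intro heq
        rw [h] at heq
        have hfst := congrArg Prod.fst heq
        have hadj' : (G.induce {w | G.dist z w = G.dist z v}).Adj ⟨u, h⟩ ⟨v, rfl⟩ := huv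
        have hne'' := (c (G.dist z v)).valid hadj'
        apply hne''
        have hgu : g (G.dist z v) u = Fin.castLE (hle _) (c (G.dist z v) ⟨u, h⟩) := by
          simp [g, h]
        have hgv : g (G.dist z v) v = Fin.castLE (hle _) (c (G.dist z v) ⟨v, rfl⟩) := by
          simp [g]
        rw [hgu, hgv] at hfst
        exact Fin.castLE_injective (hle _) hfst
      · have h1 := hdadj huv
        have h2 := hdadj huv.symm
        intro heq
        have hsnd := congrArg Prod.snd heq
        simp only [decide_eq_decide] at hsnd
        omega)
  have hcol2 : G.Colorable (m * 2) := by
    have := C.colorable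
    simpa using this
  have hchi : G.chromaticNumber.toNat ≤ m * 2 := by
    have hle2 : G.chromaticNumber ≤ (m * 2 : ℕ) := hcol2.chromaticNumber_le
    have := ENat.toNat_le_toNat hle2 (by exact_mod_cast ENat.coe_ne_top (m * 2))
    simpa using this
  -- pick k realizing the sup
  obtain ⟨k, -, hk⟩ := Finset.exists_mem_eq_sup (Finset.univ.image (G.dist z))
    ⟨G.dist z z, by simp⟩ fn
  rw [hmdef, hk] at hchi
  have hgoal : (G.chromaticNumber.toNat + 1) / 2 ≤ fn k := by omega
  exact ⟨k, hgoal⟩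
end

section
/- Let k ≥ 3 and let G be the Hajós join of two copies of K_k: G consists of two disjoint copies H₁ and H₂ of the complete graph K_{k−1}, a vertex x adjacent to every vertex of H₁ and of H₂, and two further vertices a and b, with a adjacent to b, a adjacent to every vertex of H₁, and b adjacent to every vertex of H₂, and with no other edges. Then G is 3-cycle-free, ω(G) = k, and χ(G) = k + 1. -/
open SimpleGraph

variable {V : Type*}

/-- The Hajós join of two copies of `K_k`: two disjoint copies `H₁` (the left summand)
and `H₂` (the middle summand) of `K_{k-1}`, a vertex `x` (encoded as `Sum.inr (Sum.inr 0)`)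
complete to `H₁` and `H₂`, and two adjacent vertices `a = Sum.inr (Sum.inr 1)` and
`b = Sum.inr (Sum.inr 2)` with `a` complete to `H₁` and `b` complete to `H₂`. -/
def hajosJoin (k : ℕ) : SimpleGraph (Fin (k - 1) ⊕ (Fin (k - 1) ⊕ Fin 3)) :=
  SimpleGraph.fromRel (fun u v =>
    match u, v with
    | Sum.inl _, Sum.inl _ => True
    | Sum.inr (Sum.inl _), Sum.inr (Sum.inl _) => True
    | Sum.inl _, Sum.inr (Sum.inr t) => t = 0 ∨ t = 1
    | Sum.inr (Sum.inl _), Sum.inr (Sum.inr t) => t = 0 ∨ t = 2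
    | Sum.inr (Sum.inr t), Sum.inr (Sum.inr t') => t = 1 ∧ t' = 2
    | _, _ => False)

namespace HJaux
open Finset
abbrev VV (k : ℕ) := Fin (k - 1) ⊕ (Fin (k - 1) ⊕ Fin 3)
abbrev vx (k : ℕ) : VV k := .inr (.inr 0)
abbrev va (k : ℕ) : VV k := .inr (.inr 1)
abbrev vb (k : ℕ) : VV k := .inr (.inr 2)
variable {k : ℕ}

/-- class of a vertex: 0 = left clique, 1 = middle clique, 2 = x, 3 = a, 4 = b -/
def cls : VV k → Fin 5
  | .inl _ => 0
  | .inr (.inl _) => 1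
  | .inr (.inr t) => ⟨t.val + 2, by omega⟩

lemma cls_x : cls (vx k) = 2 := rfl
lemma cls_a : cls (va k) = 3 := rfl
lemma cls_b : cls (vb k) = 4 := rfl

lemma cls_eq_zero {v : VV k} : cls v = 0 ↔ ∃ u, v = .inl u := by
  rcases v with u | u | t
  · simp [cls]
  · simp [cls]
  · fin_cases t <;> simp [cls] <;> intro u h <;> simp at h
lemma cls_eq_one {v : VV k} : cls v = 1 ↔ ∃ u, v = .inr (.inl u) := by
  rcases v with u | u | t
  · simp [cls]
  · simp [cls]
  · fin_cases t <;> simp [cls] <;> intro u h <;> simp at h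
lemma cls_eq_two {v : VV k} : cls v = 2 ↔ v = vx k := by
  rcases v with u | u | t
  · simp [cls]
  · simp [cls]
  · fin_cases t <;> simp [cls]
lemma cls_eq_three {v : VV k} : cls v = 3 ↔ v = va k := by
  rcases v with u | u | t
  · simp [cls]
  · simp [cls]
  · fin_cases t <;> simp [cls]
lemma cls_eq_four {v : VV k} : cls v = 4 ↔ v = vb k := by
  rcases v with u | u | t
  · simp [cls]
  · simp [cls]
  · fin_cases t <;> simp [cls]

/-- adjacency characterizations via classes -/
lemma adj_of_clsL {v w : VV k} (hv : cls v = 0) :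
    (hajosJoin k).Adj v w ↔ ((cls w = 0 ∧ w ≠ v) ∨ cls w = 2 ∨ cls w = 3) := by
  obtain ⟨u, rfl⟩ := cls_eq_zero.mp hv
  rcases w with u' | u' | t
  · simp [hajosJoin, cls]; tauto
  · simp [hajosJoin, cls]
  · fin_cases t <;> simp [hajosJoin, cls]
lemma adj_of_clsM {v w : VV k} (hv : cls v = 1) :
    (hajosJoin k).Adj v w ↔ ((cls w = 1 ∧ w ≠ v) ∨ cls w = 2 ∨ cls w = 4) := by
  obtain ⟨u, rfl⟩ := cls_eq_one.mp hv
  rcases w with u' | u' | t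
  · simp [hajosJoin, cls]
  · simp [hajosJoin, cls]; tauto
  · fin_cases t <;> simp [hajosJoin, cls]
lemma adj_of_clsX {w : VV k} :
    (hajosJoin k).Adj (vx k) w ↔ (cls w = 0 ∨ cls w = 1) := by
  rcases w with u' | u' | t
  · simp [hajosJoin, cls]
  · simp [hajosJoin, cls]
  · fin_cases t <;> simp [hajosJoin, cls]
lemma adj_of_clsA {w : VV k} :
    (hajosJoin k).Adj (va k) w ↔ (cls w = 0 ∨ cls w = 4) := by
  rcases w with u' | u' | t
  · simp [hajosJoin, cls]
  · simp [hajosJoin, cls]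
  · fin_cases t <;> simp [hajosJoin, cls]
lemma adj_of_clsB {w : VV k} :
    (hajosJoin k).Adj (vb k) w ↔ (cls w = 1 ∨ cls w = 3) := by
  rcases w with u' | u' | t
  · simp [hajosJoin, cls]
  · simp [hajosJoin, cls]
  · fin_cases t <;> simp [hajosJoin, cls]

lemma clique_bound (hk : 3 ≤ k) (s : Finset (VV k)) (hc : (hajosJoin k).IsClique s) :
    s.card ≤ k := by
  classical
  have hG := hc
  -- helper: two distinct members are adjacent
  have hadj : ∀ w ∈ s, ∀ w' ∈ s, w ≠ w' → (hajosJoin k).Adj w w' := by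
    intro w hw w' hw' hne; exact hc hw hw' hne
  have hLcard : (univ.image (fun u => (.inl u : VV k))).card = k - 1 := by
    rw [card_image_of_injective _ Sum.inl_injective]; simp
  have hMcard : (univ.image (fun u => (.inr (.inl u) : VV k))).card = k - 1 := by
    rw [card_image_of_injective _ (fun a b h => by simpa using h)]; simp
  by_cases hM : ∃ u, (.inr (.inl u) : VV k) ∈ s
  · -- no L vertices
    obtain ⟨u₀, hu₀⟩ := hM
    have hL : ∀ u, (.inl u : VV k) ∉ s := by
      intro u hu
      have := hadj _ hu _ hu₀ (by simp)
      simp [hajosJoin] at this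
    by_cases ha : va k ∈ s
    · -- s ⊆ {va, vb}
      have : s ⊆ {va k, vb k} := by
        intro w hw
        rcases w with u | u | t
        · exact absurd hw (hL u)
        · have := hadj _ hw _ ha (by simp)
          simp [hajosJoin] at this
        · fin_cases t
          · have := hadj _ hw _ ha (by simp)
            simp [hajosJoin] at this
          · simp
          · simp
      have h2 := card_le_card this
      rw [card_pair (by simp)] at h2
      omega
    · -- s ⊆ M ∪ {vx} or M ∪ {vb}
      have key : ∀ w ∈ s, w = vx k ∨ w = vb k ∨ ∃ u, w = .inr (.inl u) := by
        intro w hw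
        rcases w with u | u | t
        · exact absurd hw (hL u)
        · exact Or.inr (Or.inr ⟨u, rfl⟩)
        · fin_cases t
          · exact Or.inl rfl
          · exact absurd hw ha
          · exact Or.inr (Or.inl rfl)
      have hxb : ¬(vx k ∈ s ∧ vb k ∈ s) := by
        rintro ⟨h1, h2⟩
        have := hadj _ h1 _ h2 (by simp)
        simp [hajosJoin] at this
      by_cases hx : vx k ∈ s
      · have : s ⊆ (univ.image (fun u => (.inr (.inl u) : VV k))) ∪ {vx k} := by
          intro w hw
          rcases key w hw with rfl | rfl | ⟨u, rfl⟩
          · simp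
          · exact absurd ⟨hx, hw⟩ hxb
          · simp
        calc s.card ≤ _ := card_le_card this
          _ ≤ (k-1) + 1 := by
              refine (card_union_le _ _).trans ?_
              simp [hMcard]
          _ ≤ k := by omega
      · have : s ⊆ (univ.image (fun u => (.inr (.inl u) : VV k))) ∪ {vb k} := by
          intro w hw
          rcases key w hw with rfl | rfl | ⟨u, rfl⟩
          · exact absurd hw hx
          · simp
          · simp
        calc s.card ≤ _ := card_le_card this
          _ ≤ (k-1) + 1 := by
              refine (card_union_le _ _).trans ?_
              simp [hMcard]
          _ ≤ k := by omega
  · push_neg at hM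
    by_cases hb : vb k ∈ s
    · have : s ⊆ {va k, vb k} := by
        intro w hw
        rcases w with u | u | t
        · have := hadj _ hw _ hb (by simp)
          simp [hajosJoin] at this
        · exact absurd hw (hM u)
        · fin_cases t
          · have := hadj _ hw _ hb (by simp)
            simp [hajosJoin] at this
          · simp
          · simp
      have h2 := card_le_card this
      rw [card_pair (by simp)] at h2
      omega
    · have key : ∀ w ∈ s, w = vx k ∨ w = va k ∨ ∃ u, w = .inl u := by
        intro w hw
        rcases w with u | u | t
        · exact Or.inr (Or.inr ⟨u, rfl⟩)
        · exact absurd hw (hM u)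
        · fin_cases t
          · exact Or.inl rfl
          · exact Or.inr (Or.inl rfl)
          · exact absurd hw hb
      have hxa : ¬(vx k ∈ s ∧ va k ∈ s) := by
        rintro ⟨h1, h2⟩
        have := hadj _ h1 _ h2 (by simp)
        simp [hajosJoin] at this
      by_cases hx : vx k ∈ s
      · have : s ⊆ (univ.image (fun u => (.inl u : VV k))) ∪ {vx k} := by
          intro w hw
          rcases key w hw with rfl | rfl | ⟨u, rfl⟩
          · simp
          · exact absurd ⟨hx, hw⟩ hxa
          · simp
        calc s.card ≤ _ := card_le_card this
          _ ≤ (k-1) + 1 := by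
              refine (card_union_le _ _).trans ?_
              simp [hLcard]
          _ ≤ k := by omega
      · have : s ⊆ (univ.image (fun u => (.inl u : VV k))) ∪ {va k} := by
          intro w hw
          rcases key w hw with rfl | rfl | ⟨u, rfl⟩
          · exact absurd hw hx
          · simp
          · simp
        calc s.card ≤ _ := card_le_card this
          _ ≤ (k-1) + 1 := by
              refine (card_union_le _ _).trans ?_
              simp [hLcard]
          _ ≤ k := by omega

lemma adjLL {u v : Fin (k-1)} : (hajosJoin k).Adj (.inl u) (.inl v) ↔ u ≠ v := by
  simp [hajosJoin]
lemma adjMM {u v : Fin (k-1)} : (hajosJoin k).Adj (.inr (.inl u)) (.inr (.inl v)) ↔ u ≠ v := by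
  simp [hajosJoin]
lemma adjLR {u : Fin (k-1)} {t : Fin 3} :
    (hajosJoin k).Adj (.inl u) (.inr (.inr t)) ↔ t = 0 ∨ t = 1 := by
  simp [hajosJoin]
lemma adjMR {u : Fin (k-1)} {t : Fin 3} :
    (hajosJoin k).Adj (.inr (.inl u)) (.inr (.inr t)) ↔ t = 0 ∨ t = 2 := by
  simp [hajosJoin]
lemma adjLM {u v : Fin (k-1)} : ¬ (hajosJoin k).Adj (.inl u) (.inr (.inl v)) := by
  simp [hajosJoin]
lemma adjRR {t t' : Fin 3} : (hajosJoin k).Adj (.inr (.inr t)) (.inr (.inr t')) ↔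
    (t = 1 ∧ t' = 2) ∨ (t = 2 ∧ t' = 1) := by
  simp only [hajosJoin, fromRel_adj]
  fin_cases t <;> fin_cases t' <;> simp

/-- the k-clique -/
lemma isNClique_big (hk : 3 ≤ k) :
    (hajosJoin k).IsNClique k ((univ.image (fun u => (.inl u : VV k))) ∪ {vx k}) := by
  constructor
  · rintro w hw w' hw' hne
    simp only [coe_union, coe_image, coe_univ, Set.image_univ, coe_singleton,
      Set.mem_union, Set.mem_range, Set.mem_singleton_iff] at hw hw'
    rcases hw with ⟨u, rfl⟩ | rfl <;> rcases hw' with ⟨u', rfl⟩ | rfl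
    · exact adjLL.2 (by rintro rfl; exact hne rfl)
    · exact adjLR.2 (Or.inl rfl)
    · exact ((hajosJoin k).adj_symm (adjLR.2 (Or.inl rfl)))
    · exact absurd rfl hne
  · rw [card_union_of_disjoint (by simp), card_image_of_injective _ Sum.inl_injective]
    simp; omega


lemma cliqueNum_eq (hk : 3 ≤ k) : (hajosJoin k).cliqueNum = k := by
  apply le_antisymm
  · obtain ⟨s, hs⟩ := (hajosJoin k).exists_isNClique_cliqueNum
    rw [← hs.card_eq]
    exact clique_bound hk s hs.isClique
  · have h := (isNClique_big (k := k) hk)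
    have := h.isClique.card_le_cliqueNum
    rwa [h.card_eq] at this

/-- the coloring with k+1 colors -/
def colf (k : ℕ) : VV k → ℕ
  | .inl u => u.val
  | .inr (.inl u) => u.val
  | .inr (.inr t) => if t = 2 then k else k - 1

lemma colf_valid (hk : 3 ≤ k) {v w : VV k} (h : (hajosJoin k).Adj v w) :
    colf k v ≠ colf k w := by
  rcases v with u | u | t <;> rcases w with u' | u' | t' <;>
    simp only [hajosJoin, fromRel_adj] at h
  · exact fun hc => h.1 (congrArg Sum.inl (Fin.ext hc))
  · exact absurd h.2 (by simp)
  · have := u.isLt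
    rcases h.2 with (rfl | rfl) | hf
    · simp [colf]; omega
    · simp [colf]; omega
    · exact hf.elim
  · exact absurd h.2 (by simp)
  · exact fun hc => h.1 (congrArg (fun z => Sum.inr (Sum.inl z)) (Fin.ext hc))
  · have := u.isLt
    rcases h.2 with (rfl | rfl) | hf
    · simp [colf]; omega
    · simp [colf]; omega
    · exact hf.elim
  · have := u'.isLt
    rcases h.2 with hf | (rfl | rfl)
    · exact hf.elim
    · simp [colf]; omega
    · simp [colf]; omega
  · have := u'.isLt
    rcases h.2 with hf | (rfl | rfl)
    · exact hf.elim
    · simp [colf]; omega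
    · simp [colf]; omega
  · rcases h.2 with ⟨rfl, rfl⟩ | ⟨rfl, rfl⟩ <;> simp [colf] <;> omega

lemma colorable_succ (hk : 3 ≤ k) : (hajosJoin k).Colorable (k + 1) := by
  rw [colorable_iff_exists_bdd_nat_coloring]
  refine ⟨Coloring.mk (colf k) (fun h => colf_valid hk h), ?_⟩
  rintro (u | u | t)
  · show colf k (.inl u) < k + 1
    have := u.isLt; simp [colf]; omega
  · show colf k (.inr (.inl u)) < k + 1
    have := u.isLt; simp [colf]; omega
  · show colf k (.inr (.inr t)) < k + 1
    by_cases h : t = 2 <;> simp [colf, h] <;> omega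

lemma not_colorable (hk : 3 ≤ k) : ¬ (hajosJoin k).Colorable k := by
  rintro ⟨C⟩
  have hLinj : Function.Injective (fun u => C (.inl u : VV k)) := by
    intro u u' h
    by_contra hne
    exact C.valid (by simp [hajosJoin, hne]) h
  have hMinj : Function.Injective (fun u => C (.inr (.inl u) : VV k)) := by
    intro u u' h
    by_contra hne
    exact C.valid (by simp [hajosJoin, hne]) h
  have hone : ((univ.image (fun u => C (.inl u : VV k)))ᶜ).card = 1 := by
    rw [card_compl, card_image_of_injective _ hLinj]
    simp; omega
  have hone' : ((univ.image (fun u => C (.inr (.inl u) : VV k)))ᶜ).card = 1 := by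
    rw [card_compl, card_image_of_injective _ hMinj]
    simp; omega
  have hxL : C (vx k) ∈ (univ.image (fun u => C (.inl u : VV k)))ᶜ := by
    simp only [mem_compl, mem_image, mem_univ, true_and, not_exists]
    intro u h
    exact C.valid (Adj.symm (by simp [hajosJoin])) h.symm
  have haL : C (va k) ∈ (univ.image (fun u => C (.inl u : VV k)))ᶜ := by
    simp only [mem_compl, mem_image, mem_univ, true_and, not_exists]
    intro u h
    exact C.valid (Adj.symm (by simp [hajosJoin])) h.symm
  have hxM : C (vx k) ∈ (univ.image (fun u => C (.inr (.inl u) : VV k)))ᶜ := by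
    simp only [mem_compl, mem_image, mem_univ, true_and, not_exists]
    intro u h
    exact C.valid (Adj.symm (by simp [hajosJoin])) h.symm
  have hbM : C (vb k) ∈ (univ.image (fun u => C (.inr (.inl u) : VV k)))ᶜ := by
    simp only [mem_compl, mem_image, mem_univ, true_and, not_exists]
    intro u h
    exact C.valid (Adj.symm (by simp [hajosJoin])) h.symm
  have h1 : C (va k) = C (vx k) := Finset.card_le_one.mp (le_of_eq hone) _ haL _ hxL
  have h2 : C (vb k) = C (vx k) := Finset.card_le_one.mp (le_of_eq hone') _ hbM _ hxM
  exact C.valid (show (hajosJoin k).Adj (va k) (vb k) by simp [hajosJoin]) (h1.trans h2.symm)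

lemma chromatic_eq (hk : 3 ≤ k) : (hajosJoin k).chromaticNumber = (k + 1 : ℕ) := by
  apply le_antisymm
  · exact Colorable.chromaticNumber_le (colorable_succ hk)
  · by_contra h
    push_neg at h
    push_cast at h
    rw [ENat.lt_add_one_iff (by simp)] at h
    exact not_colorable hk (chromaticNumber_le_iff_colorable.mp h)

open scoped Classical

variable {n : ℕ} [NeZero n]

/-- positions of the cycle whose vertex has class `c` -/
noncomputable def fib (f : ZMod n → VV k) (c : Fin 5) : Finset (ZMod n) :=
  univ.filter (fun i => cls (f i) = c)

lemma card_partition (f : ZMod n → VV k) :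
    n = #(fib f 0) + #(fib f 1) + #(fib f 2) + #(fib f 3) + #(fib f 4) := by
  have h := Finset.card_eq_sum_card_fiberwise
    (s := (univ : Finset (ZMod n))) (t := (univ : Finset (Fin 5)))
    (f := fun i => cls (f i)) (fun i _ => mem_univ _)
  rw [card_univ, ZMod.card] at h
  refine h.trans ?_
  rw [Fin.sum_univ_five]
  rfl

lemma card_fib_single {f : ZMod n → VV k} (hinj : Function.Injective f) {c : Fin 5}
    {v : VV k} (hv : ∀ w, cls w = c ↔ w = v) : #(fib f c) ≤ 1 := by
  apply Finset.card_le_one.mpr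
  intro i hi j hj
  simp only [fib, mem_filter, mem_univ, true_and] at hi hj
  exact hinj (((hv _).mp hi).trans ((hv _).mp hj).symm)

lemma nbr_L {f : ZMod n → VV k} (hinj : Function.Injective f) {i : ZMod n}
    (hi : cls (f i) = 0) :
    univ.filter (fun j => (hajosJoin k).Adj (f i) (f j))
      = ((fib f 0).erase i) ∪ (fib f 2 ∪ fib f 3) := by
  ext j
  simp only [mem_filter, mem_univ, true_and, mem_union, mem_erase, fib,
    adj_of_clsL hi, hinj.ne_iff]
  tauto

lemma nbr_M {f : ZMod n → VV k} (hinj : Function.Injective f) {i : ZMod n}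
    (hi : cls (f i) = 1) :
    univ.filter (fun j => (hajosJoin k).Adj (f i) (f j))
      = ((fib f 1).erase i) ∪ (fib f 2 ∪ fib f 4) := by
  ext j
  simp only [mem_filter, mem_univ, true_and, mem_union, mem_erase, fib,
    adj_of_clsM hi, hinj.ne_iff]
  tauto

lemma nbr_X {f : ZMod n → VV k} {i : ZMod n} (hi : cls (f i) = 2) :
    univ.filter (fun j => (hajosJoin k).Adj (f i) (f j)) = fib f 0 ∪ fib f 1 := by
  rw [cls_eq_two] at hi
  ext j
  simp only [mem_filter, mem_univ, true_and, mem_union, fib, hi, adj_of_clsX]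

lemma nbr_A {f : ZMod n → VV k} {i : ZMod n} (hi : cls (f i) = 3) :
    univ.filter (fun j => (hajosJoin k).Adj (f i) (f j)) = fib f 0 ∪ fib f 4 := by
  rw [cls_eq_three] at hi
  ext j
  simp only [mem_filter, mem_univ, true_and, mem_union, fib, hi, adj_of_clsA]

lemma nbr_B {f : ZMod n → VV k} {i : ZMod n} (hi : cls (f i) = 4) :
    univ.filter (fun j => (hajosJoin k).Adj (f i) (f j)) = fib f 1 ∪ fib f 3 := by
  rw [cls_eq_four] at hi
  ext j
  simp only [mem_filter, mem_univ, true_and, mem_union, fib, hi, adj_of_clsB]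

lemma fib_disj {f : ZMod n → VV k} {c c' : Fin 5} (h : c ≠ c') :
    Disjoint (fib f c) (fib f c') := by
  rw [Finset.disjoint_left]
  intro j hj hj'
  simp only [fib, mem_filter, mem_univ, true_and] at hj hj'
  exact h (hj ▸ hj' ▸ rfl)

lemma mul_pred_add (a c : ℕ) : a * ((a - 1) + c) + a = a * (a + c) := by
  cases a with
  | zero => simp
  | succ b => rw [Nat.succ_sub_one]; ring

lemma deg_eq {f : ZMod n → VV k} (i : ZMod n) :
    ((hajosJoin k).comap f).degree i
      = #(univ.filter (fun j => (hajosJoin k).Adj (f i) (f j))) := by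
  rw [← card_neighborFinset_eq_degree]
  congr 1
  ext j
  simp [mem_neighborFinset, comap_adj]

lemma two_mul_edges {f : ZMod n → VV k} (hinj : Function.Injective f) :
    2 * #((hajosJoin k).comap f).edgeFinset + #(fib f 0) + #(fib f 1)
      = #(fib f 0) * (#(fib f 0) + #(fib f 2) + #(fib f 3))
      + #(fib f 1) * (#(fib f 1) + #(fib f 2) + #(fib f 4))
      + #(fib f 2) * (#(fib f 0) + #(fib f 1))
      + #(fib f 3) * (#(fib f 0) + #(fib f 4))
      + #(fib f 4) * (#(fib f 1) + #(fib f 3)) := by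
  have hhs := ((hajosJoin k).comap f).sum_degrees_eq_twice_card_edges
  have hfib := Finset.sum_fiberwise_of_maps_to
    (s := (univ : Finset (ZMod n))) (t := (univ : Finset (Fin 5)))
    (g := fun i => cls (f i)) (fun i _ => mem_univ _)
    (f := fun i => ((hajosJoin k).comap f).degree i)
  rw [hhs, Fin.sum_univ_five] at hfib
  have hL : ∑ i ∈ fib f 0, ((hajosJoin k).comap f).degree i
      = #(fib f 0) * ((#(fib f 0) - 1) + (#(fib f 2) + #(fib f 3))) := by
    rw [Finset.sum_congr rfl (g := fun _ => (#(fib f 0) - 1) + (#(fib f 2) + #(fib f 3)))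
      (fun i hi => ?_), Finset.sum_const, smul_eq_mul]
    simp only [fib, mem_filter, mem_univ, true_and] at hi
    rw [deg_eq, nbr_L hinj hi,
      card_union_of_disjoint (by
        rw [Finset.disjoint_union_right]
        exact ⟨(fib_disj (by decide)).mono_left (erase_subset _ _),
          (fib_disj (by decide)).mono_left (erase_subset _ _)⟩),
      card_union_of_disjoint (fib_disj (by decide)),
      card_erase_of_mem (by simp [fib, hi])]
  have hM : ∑ i ∈ fib f 1, ((hajosJoin k).comap f).degree i
      = #(fib f 1) * ((#(fib f 1) - 1) + (#(fib f 2) + #(fib f 4))) := by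
    rw [Finset.sum_congr rfl (g := fun _ => (#(fib f 1) - 1) + (#(fib f 2) + #(fib f 4)))
      (fun i hi => ?_), Finset.sum_const, smul_eq_mul]
    simp only [fib, mem_filter, mem_univ, true_and] at hi
    rw [deg_eq, nbr_M hinj hi,
      card_union_of_disjoint (by
        rw [Finset.disjoint_union_right]
        exact ⟨(fib_disj (by decide)).mono_left (erase_subset _ _),
          (fib_disj (by decide)).mono_left (erase_subset _ _)⟩),
      card_union_of_disjoint (fib_disj (by decide)),
      card_erase_of_mem (by simp [fib, hi])]
  have hX : ∑ i ∈ fib f 2, ((hajosJoin k).comap f).degree i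
      = #(fib f 2) * (#(fib f 0) + #(fib f 1)) := by
    rw [Finset.sum_congr rfl (g := fun _ => #(fib f 0) + #(fib f 1))
      (fun i hi => ?_), Finset.sum_const, smul_eq_mul]
    simp only [fib, mem_filter, mem_univ, true_and] at hi
    rw [deg_eq, nbr_X hi, card_union_of_disjoint (fib_disj (by decide))]
  have hA : ∑ i ∈ fib f 3, ((hajosJoin k).comap f).degree i
      = #(fib f 3) * (#(fib f 0) + #(fib f 4)) := by
    rw [Finset.sum_congr rfl (g := fun _ => #(fib f 0) + #(fib f 4))
      (fun i hi => ?_), Finset.sum_const, smul_eq_mul]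
    simp only [fib, mem_filter, mem_univ, true_and] at hi
    rw [deg_eq, nbr_A hi, card_union_of_disjoint (fib_disj (by decide))]
  have hB : ∑ i ∈ fib f 4, ((hajosJoin k).comap f).degree i
      = #(fib f 4) * (#(fib f 1) + #(fib f 3)) := by
    rw [Finset.sum_congr rfl (g := fun _ => #(fib f 1) + #(fib f 3))
      (fun i hi => ?_), Finset.sum_const, smul_eq_mul]
    simp only [fib, mem_filter, mem_univ, true_and] at hi
    rw [deg_eq, nbr_B hi, card_union_of_disjoint (fib_disj (by decide))]
  have e0 : filter (fun i => cls (f i) = 0) univ = fib f 0 := rfl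
  have e1 : filter (fun i => cls (f i) = 1) univ = fib f 1 := rfl
  have e2 : filter (fun i => cls (f i) = 2) univ = fib f 2 := rfl
  have e3 : filter (fun i => cls (f i) = 3) univ = fib f 3 := rfl
  have e4 : filter (fun i => cls (f i) = 4) univ = fib f 4 := rfl
  rw [e0, e1, e2, e3, e4, hL, hM, hX, hA, hB] at hfib
  rw [← hfib]
  have h1 := mul_pred_add (#(fib f 0)) (#(fib f 2) + #(fib f 3))
  have h2 := mul_pred_add (#(fib f 1)) (#(fib f 2) + #(fib f 4))
  rw [show #(fib f 0) * (#(fib f 0) + #(fib f 2) + #(fib f 3))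
      = #(fib f 0) * (#(fib f 0) + (#(fib f 2) + #(fib f 3))) by ring,
    show #(fib f 1) * (#(fib f 1) + #(fib f 2) + #(fib f 4))
      = #(fib f 1) * (#(fib f 1) + (#(fib f 2) + #(fib f 4))) by ring,
  ]
  linarith [h1, h2]

lemma hjTwoNeZero (hn3 : 3 ≤ n) : (2 : ZMod n) ≠ 0 := by
  intro h
  have h2 : ((2 : ℕ) : ZMod n) = 0 := by exact_mod_cast h
  rw [ZMod.natCast_eq_zero_iff] at h2
  have := Nat.le_of_dvd (by norm_num) h2
  omega

lemma two_le_nbr (hn3 : 3 ≤ n) {f : ZMod n → VV k}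
    (hadj : ∀ i, (hajosJoin k).Adj (f i) (f (i + 1))) (i : ZMod n) :
    2 ≤ #(univ.filter (fun j => (hajosJoin k).Adj (f i) (f j))) := by
  have h1 : i + 1 ∈ univ.filter (fun j => (hajosJoin k).Adj (f i) (f j)) := by
    simp only [mem_filter, mem_univ, true_and]; exact hadj i
  have h2 : i - 1 ∈ univ.filter (fun j => (hajosJoin k).Adj (f i) (f j)) := by
    simp only [mem_filter, mem_univ, true_and]
    have := hadj (i - 1)
    rw [sub_add_cancel] at this
    exact this.symm
  have hne : i + 1 ≠ i - 1 := by
    intro h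
    have : i + 2 = i := by
      rw [show i + 2 = i + 1 + 1 by ring, h, sub_add_cancel]
    exact hjTwoNeZero hn3 (add_eq_left.mp this)
  calc 2 = #({i + 1, i - 1} : Finset (ZMod n)) := (card_pair hne).symm
    _ ≤ _ := card_le_card (by
        intro j hj
        simp only [mem_insert, mem_singleton] at hj
        rcases hj with rfl | rfl
        · exact h1
        · exact h2)

lemma trichotomy (v : VV k) :
    (cls v = 0 ∨ cls v = 3) ∨ (cls v = 1 ∨ cls v = 4) ∨ cls v = 2 := by
  rcases v with u | u | t
  · simp [cls]
  · simp [cls]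
  · fin_cases t <;> simp [cls]

lemma cross_adj {u v : VV k} (hu : cls u = 0 ∨ cls u = 3)
    (hv : cls v = 1 ∨ cls v = 4) (h : (hajosJoin k).Adj u v) :
    u = va k ∧ v = vb k := by
  rcases hu with hu | hu
  · rw [adj_of_clsL hu] at h
    rcases h with ⟨h0, _⟩ | h0 | h0 <;> rcases hv with h' | h' <;>
      (rw [h0] at h'; exact absurd h' (by decide))
  · have hu' := cls_eq_three.mp hu
    subst hu'
    rw [adj_of_clsA] at h
    rcases h with h0 | h4
    · rcases hv with h' | h' <;> exact absurd (h0.symm.trans h') (by decide)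
    · exact ⟨rfl, cls_eq_four.mp h4⟩

lemma cross_adj' {u v : VV k} (hu : cls u = 1 ∨ cls u = 4)
    (hv : cls v = 0 ∨ cls v = 3) (h : (hajosJoin k).Adj u v) :
    u = vb k ∧ v = va k := by
  rcases hu with hu | hu
  · rw [adj_of_clsM hu] at h
    rcases h with ⟨h0, _⟩ | h0 | h0 <;> rcases hv with h' | h' <;>
      (rw [h0] at h'; exact absurd h' (by decide))
  · have hu' := cls_eq_four.mp hu
    subst hu'
    rw [adj_of_clsB] at h
    rcases h with h1 | h3
    · rcases hv with h' | h' <;> exact absurd (h1.symm.trans h') (by decide)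
    · exact ⟨rfl, cls_eq_three.mp h3⟩

lemma arcAB {f : ZMod n → VV k}
    (hadj : ∀ i, (hajosJoin k).Adj (f i) (f (i + 1))) {s : ZMod n} {d : ℕ}
    (hA : cls (f s) = 0 ∨ cls (f s) = 3)
    (hB : cls (f (s + (d : ZMod n))) = 1 ∨ cls (f (s + (d : ZMod n))) = 4)
    (hfree : ∀ t : ℕ, t ≤ d → f (s + (t : ZMod n)) ≠ vx k) :
    ∃ p : ZMod n, f p = va k ∧ f (p + 1) = vb k := by
  have hex : ∃ t : ℕ, t ≤ d ∧ (cls (f (s + (t : ZMod n))) = 1 ∨ cls (f (s + (t : ZMod n))) = 4) :=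
    ⟨d, le_rfl, hB⟩
  classical
  set t₀ := Nat.find hex with ht₀
  obtain ⟨ht₀d, ht₀B⟩ := Nat.find_spec hex
  rw [← ht₀] at ht₀d ht₀B
  have ht₀1 : 1 ≤ t₀ := by
    rcases Nat.eq_zero_or_pos t₀ with h0 | h; swap; · exact h
    exfalso
    rw [h0] at ht₀B
    simp only [Nat.cast_zero, add_zero] at ht₀B
    rcases hA with h | h <;> rcases ht₀B with h' | h' <;>
      (rw [h] at h'; exact absurd h' (by decide))
  have hmin := Nat.find_min hex (m := t₀ - 1) (by omega)
  push_neg at hmin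
  have hnotB := hmin (by omega)
  have hnx := hfree (t₀ - 1) (by omega)
  have hAside : cls (f (s + ((t₀ - 1 : ℕ) : ZMod n))) = 0 ∨
      cls (f (s + ((t₀ - 1 : ℕ) : ZMod n))) = 3 := by
    rcases trichotomy (f (s + ((t₀ - 1 : ℕ) : ZMod n))) with h | h | h
    · exact h
    · rcases h with h | h
      · exact absurd h hnotB.1
      · exact absurd h hnotB.2
    · exact absurd (cls_eq_two.mp h) hnx
  have hstep := hadj (s + ((t₀ - 1 : ℕ) : ZMod n))
  have hcast : (s + ((t₀ - 1 : ℕ) : ZMod n)) + 1 = s + ((t₀ : ℕ) : ZMod n) := by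
    have h' : ((t₀ - 1 : ℕ) : ZMod n) + 1 = ((t₀ : ℕ) : ZMod n) := by
      have h'' : t₀ - 1 + 1 = t₀ := by omega
      calc ((t₀ - 1 : ℕ) : ZMod n) + 1 = ((t₀ - 1 + 1 : ℕ) : ZMod n) := by push_cast; ring
        _ = _ := by rw [h'']
    rw [add_assoc, h']
  rw [hcast] at hstep
  obtain ⟨hpa, hpb⟩ := cross_adj hAside ht₀B hstep
  exact ⟨s + ((t₀ - 1 : ℕ) : ZMod n), hpa, by rw [hcast]; exact hpb⟩

lemma arcBA {f : ZMod n → VV k}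
    (hadj : ∀ i, (hajosJoin k).Adj (f i) (f (i + 1))) {s : ZMod n} {d : ℕ}
    (hA : cls (f s) = 1 ∨ cls (f s) = 4)
    (hB : cls (f (s + (d : ZMod n))) = 0 ∨ cls (f (s + (d : ZMod n))) = 3)
    (hfree : ∀ t : ℕ, t ≤ d → f (s + (t : ZMod n)) ≠ vx k) :
    ∃ p : ZMod n, f p = vb k ∧ f (p + 1) = va k := by
  have hex : ∃ t : ℕ, t ≤ d ∧ (cls (f (s + (t : ZMod n))) = 0 ∨ cls (f (s + (t : ZMod n))) = 3) :=
    ⟨d, le_rfl, hB⟩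
  classical
  set t₀ := Nat.find hex with ht₀
  obtain ⟨ht₀d, ht₀B⟩ := Nat.find_spec hex
  rw [← ht₀] at ht₀d ht₀B
  have ht₀1 : 1 ≤ t₀ := by
    rcases Nat.eq_zero_or_pos t₀ with h0 | h; swap; · exact h
    exfalso
    rw [h0] at ht₀B
    simp only [Nat.cast_zero, add_zero] at ht₀B
    rcases hA with h | h <;> rcases ht₀B with h' | h' <;>
      (rw [h] at h'; exact absurd h' (by decide))
  have hmin := Nat.find_min hex (m := t₀ - 1) (by omega)
  push_neg at hmin
  have hnotB := hmin (by omega)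
  have hnx := hfree (t₀ - 1) (by omega)
  have hAside : cls (f (s + ((t₀ - 1 : ℕ) : ZMod n))) = 1 ∨
      cls (f (s + ((t₀ - 1 : ℕ) : ZMod n))) = 4 := by
    rcases trichotomy (f (s + ((t₀ - 1 : ℕ) : ZMod n))) with h | h | h
    · rcases h with h | h
      · exact absurd h hnotB.1
      · exact absurd h hnotB.2
    · exact h
    · exact absurd (cls_eq_two.mp h) hnx
  have hstep := hadj (s + ((t₀ - 1 : ℕ) : ZMod n))
  have hcast : (s + ((t₀ - 1 : ℕ) : ZMod n)) + 1 = s + ((t₀ : ℕ) : ZMod n) := by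
    have h' : ((t₀ - 1 : ℕ) : ZMod n) + 1 = ((t₀ : ℕ) : ZMod n) := by
      have h'' : t₀ - 1 + 1 = t₀ := by omega
      calc ((t₀ - 1 : ℕ) : ZMod n) + 1 = ((t₀ - 1 + 1 : ℕ) : ZMod n) := by push_cast; ring
        _ = _ := by rw [h'']
    rw [add_assoc, h']
  rw [hcast] at hstep
  obtain ⟨hpa, hpb⟩ := cross_adj' hAside ht₀B hstep
  exact ⟨s + ((t₀ - 1 : ℕ) : ZMod n), hpa, by rw [hcast]; exact hpb⟩

lemma xab_mem (hn3 : 3 ≤ n) {f : ZMod n → VV k} (hinj : Function.Injective f)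
    (hadj : ∀ i, (hajosJoin k).Adj (f i) (f (i + 1))) {i₀ j₀ : ZMod n}
    (hi₀ : cls (f i₀) = 0) (hj₀ : cls (f j₀) = 1) :
    (∃ p, f p = vx k) ∧ (∃ p, f p = va k) ∧ (∃ p, f p = vb k) := by
  have hne : i₀ ≠ j₀ := by
    intro h; rw [h, hj₀] at hi₀; exact absurd hi₀ (by decide)
  set d := (j₀ - i₀).val with hd
  have hdcast : ((d : ℕ) : ZMod n) = j₀ - i₀ := ZMod.natCast_rightInverse _
  have hdn : d < n := ZMod.val_lt _
  have hd1 : 1 ≤ d := by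
    rcases Nat.eq_zero_or_pos d with h0 | h
    · exfalso
      rw [hd] at h0
      rw [ZMod.val_eq_zero, sub_eq_zero] at h0
      exact hne h0.symm
    · exact h
  have hij : i₀ + ((d : ℕ) : ZMod n) = j₀ := by rw [hdcast]; ring
  have hji : j₀ + ((n - d : ℕ) : ZMod n) = i₀ := by
    have hh : ((n - d : ℕ) : ZMod n) = -((d : ℕ) : ZMod n) := by
      rw [Nat.cast_sub (le_of_lt hdn), ZMod.natCast_self]; ring
    rw [hh, hdcast]; ring
  have hnd1 : 1 ≤ n - d := by omega
  have hx : ∃ p, f p = vx k := by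
    by_contra hx; push_neg at hx
    obtain ⟨p₁, hp₁a, hp₁b⟩ := arcAB hadj (d := d) (s := i₀) (Or.inl hi₀)
      (by rw [hij]; exact Or.inl hj₀) (fun t _ => hx _)
    obtain ⟨p₂, hp₂b, hp₂a⟩ := arcBA hadj (s := j₀) (d := n - d) (Or.inl hj₀)
      (by rw [hji]; exact Or.inl hi₀) (fun t _ => hx _)
    have h1 : p₁ = p₂ + 1 := hinj (hp₁a.trans hp₂a.symm)
    have h2 : p₂ = p₁ + 1 := hinj (hp₂b.trans hp₁b.symm)
    have h3 : p₁ = p₁ + 2 := by nth_rewrite 1 [h1, h2]; ring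
    exact hjTwoNeZero hn3 (left_eq_add.mp h3)
  obtain ⟨px, hpx⟩ := hx
  have hpxi : px ≠ i₀ := by
    intro h; rw [← h, hpx] at hi₀; simp [cls] at hi₀
  have hpxj : px ≠ j₀ := by
    intro h; rw [← h, hpx] at hj₀; simp [cls] at hj₀
  set e := (px - i₀).val with he
  have hecast : ((e : ℕ) : ZMod n) = px - i₀ := ZMod.natCast_rightInverse _
  have hen : e < n := ZMod.val_lt _
  have he1 : 1 ≤ e := by
    rcases Nat.eq_zero_or_pos e with h0 | h
    · exfalso
      rw [he] at h0
      rw [ZMod.val_eq_zero, sub_eq_zero] at h0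
      exact hpxi h0
    · exact h
  have hed : e ≠ d := by
    intro h
    apply hpxj
    have : px - i₀ = j₀ - i₀ := by rw [← hecast, ← hdcast, h]
    exact sub_left_inj.mp this
  rcases lt_or_gt_of_ne hed with hlt | hgt
  · -- e < d : use the arc from j₀ back to i₀, which avoids px
    have hfree : ∀ t : ℕ, t ≤ n - d → f (j₀ + (t : ZMod n)) ≠ vx k := by
      intro t ht hcon
      have h0 : j₀ + (t : ZMod n) = px := hinj (hcon.trans hpx.symm)
      have h2 : ((d : ℕ) : ZMod n) + ((t : ℕ) : ZMod n) = ((e : ℕ) : ZMod n) := by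
        rw [hdcast, hecast, ← h0]; ring
      have h3 : ((d + t : ℕ) : ZMod n) = ((e : ℕ) : ZMod n) := by push_cast; push_cast at h2; exact h2
      have h4 : (d + t) % n = e % n := (ZMod.natCast_eq_natCast_iff' _ _ _).mp h3
      have h5 : e % n = e := Nat.mod_eq_of_lt hen
      rcases Nat.lt_or_ge (d + t) n with h6 | h6
      · have h7 : (d + t) % n = d + t := Nat.mod_eq_of_lt h6
        omega
      · have h7 : d + t = n := by omega
        rw [h7, Nat.mod_self] at h4
        omega
    obtain ⟨p, hpb, hpa⟩ := arcBA hadj (s := j₀) (d := n - d) (Or.inl hj₀)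
      (by rw [hji]; exact Or.inl hi₀) hfree
    exact ⟨⟨px, hpx⟩, ⟨p + 1, hpa⟩, ⟨p, hpb⟩⟩
  · -- d < e : use the arc from i₀ to j₀, which avoids px
    have hfree : ∀ t : ℕ, t ≤ d → f (i₀ + (t : ZMod n)) ≠ vx k := by
      intro t ht hcon
      have h0 : i₀ + (t : ZMod n) = px := hinj (hcon.trans hpx.symm)
      have h2 : ((t : ℕ) : ZMod n) = ((e : ℕ) : ZMod n) := by rw [hecast, ← h0]; ring
      have h4 : t % n = e % n := (ZMod.natCast_eq_natCast_iff' _ _ _).mp h2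
      have h5 : e % n = e := Nat.mod_eq_of_lt hen
      have h6 : t % n = t := Nat.mod_eq_of_lt (by omega)
      omega
    obtain ⟨p, hpa, hpb⟩ := arcAB hadj (s := i₀) (d := d) (Or.inl hi₀)
      (by rw [hij]; exact Or.inl hj₀) hfree
    exact ⟨⟨px, hpx⟩, ⟨p, hpa⟩, ⟨p + 1, hpb⟩⟩

lemma chord_card (hn3 : 3 ≤ n) {f : ZMod n → VV k} (hinj : Function.Injective f)
    (hadj : ∀ i, (hajosJoin k).Adj (f i) (f (i + 1))) :
    (chordSet (hajosJoin k) f).ncard + n = #((hajosJoin k).comap f).edgeFinset := by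
  have hsub : Set.range (fun i : ZMod n => s(f i, f (i + 1)))
      ⊆ Sym2.map f '' ((hajosJoin k).comap f).edgeSet := by
    rintro e ⟨i, rfl⟩
    exact ⟨s(i, i + 1), (SimpleGraph.mem_edgeSet _).mpr (hadj i), Sym2.map_pair_eq f i (i + 1)⟩
  have hchord : chordSet (hajosJoin k) f
      = (Sym2.map f '' ((hajosJoin k).comap f).edgeSet)
        \ Set.range (fun i : ZMod n => s(f i, f (i + 1))) := by
    ext e
    constructor
    · rintro ⟨i, j, rfl, hadj', hne1, hne2⟩
      refine ⟨⟨s(i, j), (SimpleGraph.mem_edgeSet _).mpr hadj', Sym2.map_pair_eq f i j⟩, ?_⟩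
      rintro ⟨p, hp⟩
      simp only at hp
      rw [Sym2.eq_iff] at hp
      rcases hp with ⟨h1, h2⟩ | ⟨h1, h2⟩
      · exact hne1 ((hinj h2).symm.trans (by rw [hinj h1]))
      · exact hne2 ((hinj h2).symm.trans (by rw [hinj h1]))
    · rintro ⟨⟨p, hp, rfl⟩, hnot⟩
      revert hp hnot
      induction p using Sym2.ind with
      | _ i j =>
        intro hp hnot
        rw [Sym2.map_pair_eq]
        refine ⟨i, j, rfl, (SimpleGraph.mem_edgeSet _).mp hp, ?_, ?_⟩
        · intro h
          subst h
          exact hnot ⟨i, (Sym2.map_pair_eq f i (i + 1)).symm⟩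
        · intro h
          subst h
          exact hnot ⟨j, by rw [Sym2.map_pair_eq]; exact Sym2.eq_swap⟩
  have hginj : Function.Injective (fun i : ZMod n => s(f i, f (i + 1))) := by
    intro i p h
    simp only [Sym2.eq_iff] at h
    rcases h with ⟨h1, h2⟩ | ⟨h1, h2⟩
    · exact hinj h1
    · exfalso
      have e1 : i = p + 1 := hinj h1
      have e2 : p = i + 1 := (hinj h2).symm
      have h3 : i = i + 2 := by nth_rewrite 1 [e1, e2]; ring
      exact hjTwoNeZero hn3 (left_eq_add.mp h3)
  have hCE : (Set.range (fun i : ZMod n => s(f i, f (i + 1)))).ncard = n := by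
    rw [← Set.image_univ, Set.ncard_image_of_injective _ hginj, Set.ncard_univ,
      Nat.card_eq_fintype_card, ZMod.card]
  have hAE : (Sym2.map f '' ((hajosJoin k).comap f).edgeSet).ncard
      = #((hajosJoin k).comap f).edgeFinset := by
    rw [Set.ncard_image_of_injective _ (Sym2.map.injective hinj),
      ← SimpleGraph.coe_edgeFinset, Set.ncard_coe_finset]
  have hle := Set.ncard_le_ncard hsub (Set.toFinite _)
  have hdiff := Set.ncard_diff hsub (Set.toFinite _)
  rw [hchord, hdiff, hCE, hAE]
  rw [hCE, hAE] at hle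
  omega

lemma three_mul_le (a : ℕ) : 3 * a ≤ a * a + 2 := by
  rcases a with _ | _ | a
  · simp
  · simp
  · nlinarith

set_option maxHeartbeats 2000000 in
lemma no_three_chords (hn3 : 3 ≤ n) {f : ZMod n → VV k} (hinj : Function.Injective f)
    (hadj : ∀ i, (hajosJoin k).Adj (f i) (f (i + 1))) :
    (chordSet (hajosJoin k) f).ncard ≠ 3 := by
  intro hc
  have hpart := card_partition f
  have hX1 : #(fib f 2) ≤ 1 := card_fib_single hinj (fun w => cls_eq_two)
  have hA1 : #(fib f 3) ≤ 1 := card_fib_single hinj (fun w => cls_eq_three)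
  have hB1 : #(fib f 4) ≤ 1 := card_fib_single hinj (fun w => cls_eq_four)
  have hE := two_mul_edges (f := f) hinj
  have hCC := chord_card hn3 hinj hadj
  rw [hc] at hCC
  set L := #(fib f 0)
  set M := #(fib f 1)
  set X := #(fib f 2)
  set A := #(fib f 3)
  set B := #(fib f 4)
  set E := #((hajosJoin k).comap f).edgeFinset with hEdef
  -- degree constraints
  have conL : 1 ≤ L → 2 ≤ (L - 1) + (X + A) := by
    intro h
    obtain ⟨i, hi⟩ := card_pos.mp h
    have hi' : cls (f i) = 0 := by simpa [fib] using hi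
    have h2 := two_le_nbr hn3 hadj i
    rwa [nbr_L hinj hi',
      card_union_of_disjoint (by
        rw [Finset.disjoint_union_right]
        exact ⟨(fib_disj (by decide)).mono_left (erase_subset _ _),
          (fib_disj (by decide)).mono_left (erase_subset _ _)⟩),
      card_union_of_disjoint (fib_disj (by decide)),
      card_erase_of_mem (by simp [fib, hi'])] at h2
  have conM : 1 ≤ M → 2 ≤ (M - 1) + (X + B) := by
    intro h
    obtain ⟨i, hi⟩ := card_pos.mp h
    have hi' : cls (f i) = 1 := by simpa [fib] using hi
    have h2 := two_le_nbr hn3 hadj i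
    rwa [nbr_M hinj hi',
      card_union_of_disjoint (by
        rw [Finset.disjoint_union_right]
        exact ⟨(fib_disj (by decide)).mono_left (erase_subset _ _),
          (fib_disj (by decide)).mono_left (erase_subset _ _)⟩),
      card_union_of_disjoint (fib_disj (by decide)),
      card_erase_of_mem (by simp [fib, hi'])] at h2
  have conX : 1 ≤ X → 2 ≤ L + M := by
    intro h
    obtain ⟨i, hi⟩ := card_pos.mp h
    have hi' : cls (f i) = 2 := by simpa [fib] using hi
    have h2 := two_le_nbr hn3 hadj i
    rwa [nbr_X hi', card_union_of_disjoint (fib_disj (by decide))] at h2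
  have conA : 1 ≤ A → 2 ≤ L + B := by
    intro h
    obtain ⟨i, hi⟩ := card_pos.mp h
    have hi' : cls (f i) = 3 := by simpa [fib] using hi
    have h2 := two_le_nbr hn3 hadj i
    rwa [nbr_A hi', card_union_of_disjoint (fib_disj (by decide))] at h2
  have conB : 1 ≤ B → 2 ≤ M + A := by
    intro h
    obtain ⟨i, hi⟩ := card_pos.mp h
    have hi' : cls (f i) = 4 := by simpa [fib] using hi
    have h2 := two_le_nbr hn3 hadj i
    rwa [nbr_B hi', card_union_of_disjoint (fib_disj (by decide))] at h2
  have conLM : 1 ≤ L → 1 ≤ M → 1 ≤ X ∧ 1 ≤ A ∧ 1 ≤ B := by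
    intro h1 h2
    obtain ⟨i₀, hi₀⟩ := card_pos.mp h1
    obtain ⟨j₀, hj₀⟩ := card_pos.mp h2
    have hi₀' : cls (f i₀) = 0 := by simpa [fib] using hi₀
    have hj₀' : cls (f j₀) = 1 := by simpa [fib] using hj₀
    obtain ⟨⟨p1, hp1⟩, ⟨p2, hp2⟩, ⟨p3, hp3⟩⟩ := xab_mem hn3 hinj hadj hi₀' hj₀'
    refine ⟨card_pos.mpr ⟨p1, ?_⟩, card_pos.mpr ⟨p2, ?_⟩, card_pos.mpr ⟨p3, ?_⟩⟩
    · simp only [fib, mem_filter, mem_univ, true_and]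
      rw [cls_eq_two]; exact hp1
    · simp only [fib, mem_filter, mem_univ, true_and]
      rw [cls_eq_three]; exact hp2
    · simp only [fib, mem_filter, mem_univ, true_and]
      rw [cls_eq_four]; exact hp3
  -- arithmetic
  have hEE : E = 3 + (L + M + X + A + B) := by omega
  have master : 3*L + 3*M + 2*X + 2*A + 2*B + 6
      = L * (L + X + A) + M * (M + X + B) + X * (L + M) + A * (L + B) + B * (M + A) := by
    rw [← hE, hEE]; ring
  have key : L * L + M * M ≤ 3 * L + 3 * M + 12 := by nlinarith [master, hX1, hA1, hB1]
  have h14L : L * L ≤ 3 * L + 14 := by linarith [three_mul_le M, key]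
  have h14M : M * M ≤ 3 * M + 14 := by linarith [three_mul_le L, key]
  have hL5 : L ≤ 5 := by nlinarith [h14L]
  have hM5 : M ≤ 5 := by nlinarith [h14M]
  clear hE hCC hEE hpart key h14L h14M
  interval_cases L <;> interval_cases M <;> interval_cases X <;> interval_cases A <;>
    interval_cases B <;> omega

end HJaux

/-- The Hajós join of two copies of `K_k` (`k ≥ 3`) has no cycle with exactly three
chords, has clique number `k`, and has chromatic number `k + 1`. -/
theorem hajosJoin_threeChordFree_cliqueNum_chromatic (k : ℕ) (hk : 3 ≤ k) :
    ¬ HasCycleWithChords (hajosJoin k) 3 ∧ (hajosJoin k).cliqueNum = k ∧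
      (hajosJoin k).chromaticNumber = (k + 1 : ℕ) := by
  refine ⟨?_, HJaux.cliqueNum_eq hk, HJaux.chromatic_eq hk⟩
  rintro ⟨n, f, ⟨hn3, hinj, hadj⟩, hcard⟩
  haveI : NeZero n := ⟨by omega⟩
  exact HJaux.no_three_chords hn3 hinj hadj hcard
end

section
/- Let G be a 3-cycle-free graph and let K be a clique of G with |K| ≥ 4. Then every vertex u not in K that has at least one neighbor in K has either exactly one neighbor in K or at least |K| − 1 neighbors in K. -/
open SimpleGraph

variable {V : Type*}

/-- In a 3-cycle-free graph, a vertex outside a clique `K` of size at least 4 having a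
neighbor in `K` has exactly one neighbor in `K` or at least `|K| - 1` neighbors in `K`. -/
theorem neighbors_in_clique {V : Type*} [Fintype V]
    (G : SimpleGraph V) (h3 : ¬ HasCycleWithChords G 3)
    (K : Set V) (hK : G.IsClique K) (hcard : 4 ≤ K.ncard)
    (u : V) (hu : u ∉ K) (hnb : ∃ y ∈ K, G.Adj u y) :
    {y ∈ K | G.Adj u y}.ncard = 1 ∨ K.ncard - 1 ≤ {y ∈ K | G.Adj u y}.ncard := by
  by_contra hcon
  push_neg at hcon
  obtain ⟨h1, h2⟩ := hcon
  set S := {y ∈ K | G.Adj u y} with hSdef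
  have hSK : S ⊆ K := fun y hy => hy.1
  have hS1 : 0 < S.ncard := by
    obtain ⟨y, hyK, hyA⟩ := hnb
    exact (Set.ncard_pos (Set.toFinite S)).2 ⟨y, hyK, hyA⟩
  have hS2 : 1 < S.ncard := by omega
  obtain ⟨a, b, ha, hb, hab⟩ := (Set.one_lt_ncard_iff (Set.toFinite S)).1 hS2
  have hdiff : 1 < (K \ S).ncard := by
    rw [Set.ncard_diff hSK (Set.toFinite S)]
    omega
  obtain ⟨c, d, hc, hd, hcd⟩ := (Set.one_lt_ncard_iff (Set.toFinite _)).1 hdiff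
  -- basic facts
  obtain ⟨haK, hua⟩ := ha
  obtain ⟨hbK, hub⟩ := hb
  obtain ⟨hcK, hucS⟩ := hc
  obtain ⟨hdK, hudS⟩ := hd
  have huc : ¬ G.Adj u c := fun h => hucS ⟨hcK, h⟩
  have hud : ¬ G.Adj u d := fun h => hudS ⟨hdK, h⟩
  have hua' : u ≠ a := fun h => hu (h ▸ haK)
  have hub' : u ≠ b := fun h => hu (h ▸ hbK)
  have huc' : u ≠ c := fun h => hu (h ▸ hcK)
  have hud' : u ≠ d := fun h => hu (h ▸ hdK)
  have hac : a ≠ c := fun h => huc (h ▸ hua)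
  have had : a ≠ d := fun h => hud (h ▸ hua)
  have hbc : b ≠ c := fun h => huc (h ▸ hub)
  have hbd : b ≠ d := fun h => hud (h ▸ hub)
  -- clique adjacencies
  have Aac : G.Adj a c := hK haK hcK hac
  have Aad : G.Adj a d := hK haK hdK had
  have Aab : G.Adj a b := hK haK hbK hab
  have Acd : G.Adj c d := hK hcK hdK hcd
  have Acb : G.Adj c b := hK hcK hbK (Ne.symm hbc)
  have Adb : G.Adj d b := hK hdK hbK (Ne.symm hbd)
  apply h3
  let f : ZMod 5 → V := ![u, a, c, d, b]
  refine ⟨5, f, ⟨by norm_num, ?_, ?_⟩, ?_⟩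
  · -- injective
    intro i j hij
    fin_cases i <;> fin_cases j <;>
      first
      | rfl
      | exact absurd hij hua'
      | exact absurd hij hua'.symm
      | exact absurd hij huc'
      | exact absurd hij huc'.symm
      | exact absurd hij hud'
      | exact absurd hij hud'.symm
      | exact absurd hij hub'
      | exact absurd hij hub'.symm
      | exact absurd hij hac
      | exact absurd hij hac.symm
      | exact absurd hij had
      | exact absurd hij had.symm
      | exact absurd hij hab
      | exact absurd hij hab.symm
      | exact absurd hij hcd
      | exact absurd hij hcd.symm
      | exact absurd hij hbc
      | exact absurd hij hbc.symm
      | exact absurd hij hbd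
      | exact absurd hij hbd.symm
  · intro i
    fin_cases i
    · exact hua
    · exact Aac
    · exact Acd
    · exact Adb
    · exact hub.symm
  · have hset : chordSet G f = {s(a, d), s(a, b), s(c, b)} := by
      ext e
      constructor
      · rintro ⟨i, j, rfl, hadj, hj, hi⟩
        simp only [Set.mem_insert_iff, Set.mem_singleton_iff]
        fin_cases i <;> fin_cases j <;>
          first
          | exact absurd rfl hj
          | exact absurd rfl hi
          | exact absurd hadj G.irrefl
          | exact absurd hadj huc
          | exact absurd hadj hud
          | exact absurd hadj (fun h => huc h.symm)
          | exact absurd hadj (fun h => hud h.symm)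
          | exact Or.inl rfl
          | exact Or.inl Sym2.eq_swap
          | exact Or.inr (Or.inl rfl)
          | exact Or.inr (Or.inl Sym2.eq_swap)
          | exact Or.inr (Or.inr rfl)
          | exact Or.inr (Or.inr Sym2.eq_swap)
      · intro he
        simp only [Set.mem_insert_iff, Set.mem_singleton_iff] at he
        rcases he with rfl | rfl | rfl
        · exact ⟨1, 3, rfl, Aad, by decide, by decide⟩
        · exact ⟨1, 4, rfl, Aab, by decide, by decide⟩
        · exact ⟨2, 4, rfl, Acb, by decide, by decide⟩
    rw [hset]
    rw [Set.ncard_insert_of_notMem (by simp [Sym2.eq_iff]; tauto) (Set.toFinite _),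
      Set.ncard_insert_of_notMem (by simp [Sym2.eq_iff]; tauto) (Set.toFinite _),
      Set.ncard_singleton]
end
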